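/- arXiv:2407.05240 — 10 statements merged into one kernel-verified Lean document; each statement's English description precedes it below -/
import Mathlib

section
/- Let A be a finite set of agents with an irreflexive preference relation P, and let G be a simple seat graph on a vertex set of size |A|. If there exists a subset X ⊆ A such that the restriction of P to A ∖ X has no directed cycle, and |X| is at most the number of leaves (degree-one vertices) of G, then there exists a neighborhood stable assignment of the agents to the vertices of G. -/
/-- The utility of agent `i` under assignment `π`: the number of seats adjacent to
`i`'s seat whose occupant `i` approves. -/
noncomputable def utility {A V : Type*} (G : SimpleGraph V) (P : A → A → Prop)
    (π : A ≃ V) (i : A) : ℕ :=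
  Set.ncard {v : V | G.Adj (π i) v ∧ P i (π.symm v)}

/-- Agent `i` envies agent `j` under `π` if `i`'s utility strictly increases after the
two exchange seats. -/
noncomputable def envies {A V : Type*} [DecidableEq A] (G : SimpleGraph V) (P : A → A → Prop)
    (π : A ≃ V) (i j : A) : Prop :=
  utility G P π i < utility G P ((Equiv.swap i j).trans π) i

/-- Agents `i` and `j` form a blocking pair under `π` if each envies the other. -/
noncomputable def blockingPair {A V : Type*} [DecidableEq A] (G : SimpleGraph V) (P : A → A → Prop)
    (π : A ≃ V) (i j : A) : Prop :=
  envies G P π i j ∧ envies G P π j i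

/-- An assignment is neighborhood stable if no blocking pair occupies adjacent seats. -/
noncomputable def NeighborhoodStable {A V : Type*} [DecidableEq A] (G : SimpleGraph V) (P : A → A → Prop)
    (π : A ≃ V) : Prop :=
  ∀ i j : A, blockingPair G P π i j → ¬ G.Adj (π i) (π j)

/-- The cycle seat graph `C_n` on vertices `ZMod n`, with `v` adjacent to `v + 1`. -/
def cycleSeatGraph (n : ℕ) : SimpleGraph (ZMod n) :=
  SimpleGraph.fromRel (fun i j => j = i + 1)

section Aux

open Finset

open Classical in
/-- Finset version of the utility. -/
noncomputable def uF {A V : Type*} [Fintype V] (G : SimpleGraph V) [DecidableRel G.Adj]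
    (P : A → A → Prop) (π : A ≃ V) (k : A) : ℕ :=
  ((G.neighborFinset (π k)).filter (fun v => P k (π.symm v))).card

lemma utility_eq_uF {A V : Type*} [Fintype V] (G : SimpleGraph V) [DecidableRel G.Adj]
    (P : A → A → Prop) (π : A ≃ V) (k : A) : utility G P π k = uF G P π k := by
  classical
  have h : {v : V | G.Adj (π k) v ∧ P k (π.symm v)}
      = ↑((G.neighborFinset (π k)).filter (fun v => P k (π.symm v))) := by
    ext v; simp [SimpleGraph.mem_neighborFinset]
  rw [utility, h, Set.ncard_coe_finset, uF]

open Classical in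
lemma uF_cast {A V : Type*} [Fintype V] (G : SimpleGraph V) [DecidableRel G.Adj]
    (P : A → A → Prop) (π : A ≃ V) (k : A) :
    (uF G P π k : ℤ) = ∑ v ∈ G.neighborFinset (π k),
      (if P k (π.symm v) then (1:ℤ) else 0) := by
  classical
  rw [uF, Finset.card_filter]
  push_cast
  rfl

/-- An occupant of a seat adjacent to a leaf never envies the occupant of the leaf. -/
lemma no_envy_leaf {A V : Type*} [DecidableEq A] [Fintype V] [DecidableEq V]
    (G : SimpleGraph V) [DecidableRel G.Adj] (P : A → A → Prop) (π : A ≃ V) (i j : A)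
    (hdeg : G.degree (π i) = 1) (hadj : G.Adj (π i) (π j)) :
    ¬ envies G P π j i := by
  classical
  have hmem : π j ∈ G.neighborFinset (π i) := by
    simpa [SimpleGraph.mem_neighborFinset] using hadj
  have hN : G.neighborFinset (π i) = {π j} := by
    obtain ⟨a, ha⟩ := Finset.card_eq_one.mp ((G.card_neighborFinset_eq_degree (π i)).trans hdeg)
    rw [ha] at hmem ⊢
    simp only [Finset.mem_singleton] at hmem
    rw [hmem]
  rw [envies, not_lt, utility_eq_uF, utility_eq_uF]
  set σ : A ≃ V := (Equiv.swap j i).trans π with hσ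
  have hσj : σ j = π i := by
    simp [hσ, Equiv.trans_apply, Equiv.swap_apply_left]
  have hσsymm : σ.symm (π j) = i := by
    simp [hσ, Equiv.symm_trans_apply, Equiv.symm_swap, Equiv.swap_apply_left]
  have hLHS : uF G P σ j = if P j i then 1 else 0 := by
    rw [uF, hσj, hN, Finset.filter_singleton]
    by_cases h : P j i
    · rw [if_pos (by rwa [hσsymm]), if_pos h, Finset.card_singleton]
    · rw [if_neg (by rwa [hσsymm]), if_neg h, Finset.card_empty]
  rw [hLHS]
  by_cases h : P j i
  · rw [if_pos h]
    have : π i ∈ (G.neighborFinset (π j)).filter (fun v => P j (π.symm v)) := by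
      simp [SimpleGraph.mem_neighborFinset, hadj.symm, h]
    calc 1 = ({π i} : Finset V).card := by simp
      _ ≤ _ := Finset.card_le_card (Finset.singleton_subset_iff.mpr this)
  · rw [if_neg h]
    exact Nat.zero_le _

open Classical in
/-- A rank function for an acyclic relation: strictly monotone along the relation
and injective. -/
noncomputable def rnk {A : Type*} [Fintype A] (Q : A → A → Prop) (a : A) : ℕ :=
  Fintype.card A * (Finset.univ.filter (fun b => Relation.TransGen Q b a)).card
    + (Fintype.equivFin A a : ℕ)

lemma rnk_lt {A : Type*} [Fintype A] (Q : A → A → Prop)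
    (hacyc : ∀ a, ¬ Relation.TransGen Q a a) {a b : A} (h : Q a b) :
    rnk Q a < rnk Q b := by
  classical
  have hsub : (Finset.univ.filter (fun x => Relation.TransGen Q x a))
      ⊆ (Finset.univ.filter (fun x => Relation.TransGen Q x b)) := by
    intro x hx
    simp only [Finset.mem_filter, Finset.mem_univ, true_and] at hx ⊢
    exact hx.tail h
  have hmem : a ∈ Finset.univ.filter (fun x => Relation.TransGen Q x b) := by
    simp only [Finset.mem_filter, Finset.mem_univ, true_and]
    exact Relation.TransGen.single h
  have hnot : a ∉ Finset.univ.filter (fun x => Relation.TransGen Q x a) := by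
    simp only [Finset.mem_filter, Finset.mem_univ, true_and]
    exact hacyc a
  have hlt : (Finset.univ.filter (fun x => Relation.TransGen Q x a)).card
      < (Finset.univ.filter (fun x => Relation.TransGen Q x b)).card := by
    apply Finset.card_lt_card
    rw [Finset.ssubset_iff_of_subset hsub]
    exact ⟨a, hmem, hnot⟩
  have hia : (Fintype.equivFin A a : ℕ) < Fintype.card A := Fin.is_lt _
  unfold rnk
  set n := Fintype.card A
  set ca := (Finset.univ.filter (fun x => Relation.TransGen Q x a)).card
  set cb := (Finset.univ.filter (fun x => Relation.TransGen Q x b)).card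
  calc n * ca + (Fintype.equivFin A a : ℕ) < n * ca + n := by omega
    _ = n * (ca + 1) := by ring
    _ ≤ n * cb := Nat.mul_le_mul_left n hlt
    _ ≤ n * cb + (Fintype.equivFin A b : ℕ) := Nat.le_add_right _ _

lemma rnk_inj {A : Type*} [Fintype A] (Q : A → A → Prop) :
    Function.Injective (rnk Q) := by
  classical
  intro a b h
  have ha : (Fintype.equivFin A a : ℕ) < Fintype.card A := Fin.is_lt _
  have hb : (Fintype.equivFin A b : ℕ) < Fintype.card A := Fin.is_lt _
  have h2 : (Fintype.equivFin A a : ℕ) = (Fintype.equivFin A b : ℕ) := by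
    have := congrArg (· % Fintype.card A) h
    simpa [rnk, Nat.mul_add_mod, Nat.mod_eq_of_lt ha, Nat.mod_eq_of_lt hb] using this
  exact (Fintype.equivFin A).injective (Fin.ext h2)

/-- Key counting lemma: swapping a blocking pair strictly increases the weighted
total utility, provided the weights of "interfering" agents are small. -/
lemma key_lemma {A V : Type*} [Fintype A] [DecidableEq A] [Fintype V] [DecidableEq V]
    (G : SimpleGraph V) [DecidableRel G.Adj] (P : A → A → Prop) (π : A ≃ V) (i j : A)
    (hne : i ≠ j) (w : A → ℕ) (B : ℕ)
    (hΔi : uF G P π i < uF G P ((Equiv.swap i j).trans π) i)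
    (hΔj : uF G P π j < uF G P ((Equiv.swap i j).trans π) j)
    (hwB : ∀ k, k ≠ i → k ≠ j → (P k i ∨ P k j) → w k ≤ B)
    (hwij : Fintype.card A * (2 * B) < w i + w j) :
    (∑ k, w k * uF G P π k) < ∑ k, w k * uF G P ((Equiv.swap i j).trans π) k := by
  classical
  set σ : A ≃ V := (Equiv.swap i j).trans π with hσ
  set Δ : A → ℤ := fun k => (uF G P σ k : ℤ) - uF G P π k with hΔ
  set f : A → ℤ := fun k => (w k : ℤ) * Δ k with hf
  -- facts about Δ for k ≠ i, j
  have hfact : ∀ k, k ≠ i → k ≠ j →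
      ((¬ P k i ∧ ¬ P k j) → Δ k = 0) ∧ (-2 ≤ Δ k) := by
    intro k hki hkj
    have hσk : σ k = π k := by
      simp [hσ, Equiv.trans_apply, Equiv.swap_apply_of_ne_of_ne hki hkj]
    have hsymm : ∀ v : V, σ.symm v = Equiv.swap i j (π.symm v) := by
      intro v
      simp [hσ, Equiv.symm_trans_apply, Equiv.symm_swap]
    set t : V → ℤ := fun v =>
      (if P k (Equiv.swap i j (π.symm v)) then (1:ℤ) else 0)
        - (if P k (π.symm v) then (1:ℤ) else 0) with ht
    have hD : Δ k = ∑ v ∈ G.neighborFinset (π k), t v := by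
      show (uF G P σ k : ℤ) - uF G P π k = _
      rw [uF_cast, uF_cast, hσk, ← Finset.sum_sub_distrib]
      exact Finset.sum_congr rfl (fun v _ => by rw [hsymm v])
    constructor
    · rintro ⟨hPi, hPj⟩
      rw [hD]
      apply Finset.sum_eq_zero
      intro v _
      rcases eq_or_ne (π.symm v) i with h | h
      · simp [ht, h, Equiv.swap_apply_left, hPi, hPj]
      rcases eq_or_ne (π.symm v) j with h2 | h2
      · simp [ht, h2, Equiv.swap_apply_right, hPi, hPj]
      · simp [ht, Equiv.swap_apply_of_ne_of_ne h h2]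
    · rw [hD]
      rw [← Finset.sum_filter_of_ne (p := fun v => v = π i ∨ v = π j)
        (by
          intro v _ hv
          by_contra hcon
          push_neg at hcon
          apply hv
          have h1 : π.symm v ≠ i := by
            intro h; exact hcon.1 (by rw [← h, Equiv.apply_symm_apply])
          have h2 : π.symm v ≠ j := by
            intro h; exact hcon.2 (by rw [← h, Equiv.apply_symm_apply])
          simp [ht, Equiv.swap_apply_of_ne_of_ne h1 h2])]
      set fs := (G.neighborFinset (π k)).filter (fun v => v = π i ∨ v = π j) with hfs
      have h1 : ∀ v ∈ fs, (-1 : ℤ) ≤ t v := by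
        intro v _
        simp only [ht]
        split <;> split <;> norm_num
      have h2 : fs.card ≤ 2 := by
        have hsub : fs ⊆ {π i, π j} := by
          intro v hv
          simp only [hfs, Finset.mem_filter] at hv
          simpa using hv.2
        calc fs.card ≤ ({π i, π j} : Finset V).card := Finset.card_le_card hsub
          _ ≤ ({π j} : Finset V).card + 1 := Finset.card_insert_le _ _
          _ = 2 := by simp
      have h3 : (fs.card : ℤ) • (-1 : ℤ) ≤ ∑ v ∈ fs, t v := by
        calc (fs.card : ℤ) • (-1 : ℤ) = ∑ _v ∈ fs, (-1 : ℤ) := by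
              rw [Finset.sum_const]; simp
          _ ≤ ∑ v ∈ fs, t v := Finset.sum_le_sum h1
      have h4 : (fs.card : ℤ) • (-1 : ℤ) = -(fs.card : ℤ) := by simp
      rw [h4] at h3
      have h5 : -(2:ℤ) ≤ -(fs.card : ℤ) := by
        have := h2; omega
      linarith
  -- split sum
  have hmemi : i ∈ Finset.univ.erase j := Finset.mem_erase.mpr ⟨hne, Finset.mem_univ i⟩
  have e2 : ∑ k ∈ Finset.univ.erase j, f k + f j = ∑ k, f k :=
    Finset.sum_erase_add _ _ (Finset.mem_univ j)
  have e3 : ∑ k ∈ (Finset.univ.erase j).erase i, f k + f i = ∑ k ∈ Finset.univ.erase j, f k :=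
    Finset.sum_erase_add _ _ hmemi
  -- bound rest
  have hrest : ∀ k ∈ (Finset.univ.erase j).erase i, -(2 * (B:ℤ)) ≤ f k := by
    intro k hk
    have hki : k ≠ i := (Finset.mem_erase.mp hk).1
    have hkj : k ≠ j := (Finset.mem_erase.mp (Finset.mem_erase.mp hk).2).1
    obtain ⟨hzero, hlb⟩ := hfact k hki hkj
    show -(2 * (B:ℤ)) ≤ (w k : ℤ) * Δ k
    by_cases hP : P k i ∨ P k j
    · have hw : (w k : ℤ) ≤ B := by exact_mod_cast hwB k hki hkj hP
      have hw0 : (0:ℤ) ≤ (w k : ℤ) := by positivity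
      nlinarith
    · push_neg at hP
      rw [hzero hP, mul_zero]
      have : (0:ℤ) ≤ 2 * B := by positivity
      linarith
  have hcard : ((Finset.univ.erase j).erase i).card ≤ Fintype.card A := by
    calc ((Finset.univ.erase j).erase i).card ≤ (Finset.univ.erase j).card :=
          Finset.card_erase_le
      _ ≤ (Finset.univ : Finset A).card := Finset.card_erase_le
      _ = Fintype.card A := Finset.card_univ
  have hsum_rest : -((Fintype.card A : ℤ) * (2 * B))
      ≤ ∑ k ∈ (Finset.univ.erase j).erase i, f k := by
    have h4 : ∑ _k ∈ (Finset.univ.erase j).erase i, -(2 * (B:ℤ))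
        ≤ ∑ k ∈ (Finset.univ.erase j).erase i, f k := Finset.sum_le_sum hrest
    rw [Finset.sum_const] at h4
    have h5 : (((Finset.univ.erase j).erase i).card : ℤ) * (2 * B)
        ≤ (Fintype.card A : ℤ) * (2 * B) := by
      have hB : (0:ℤ) ≤ 2 * B := by positivity
      have hc : (((Finset.univ.erase j).erase i).card : ℤ) ≤ (Fintype.card A : ℤ) := by
        exact_mod_cast hcard
      nlinarith
    have h6 : (((Finset.univ.erase j).erase i).card) • (-(2 * (B:ℤ)))
        = -((((Finset.univ.erase j).erase i).card : ℤ) * (2 * B)) := by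
      simp [mul_comm]
    rw [h6] at h4
    linarith
  -- bounds on f i, f j
  have hfi : (w i : ℤ) ≤ f i := by
    have h1 : (1:ℤ) ≤ Δ i := by
      show (1:ℤ) ≤ (uF G P σ i : ℤ) - uF G P π i
      omega
    have hw0 : (0:ℤ) ≤ (w i : ℤ) := by positivity
    show (w i : ℤ) ≤ (w i : ℤ) * Δ i
    nlinarith
  have hfj : (w j : ℤ) ≤ f j := by
    have h1 : (1:ℤ) ≤ Δ j := by
      show (1:ℤ) ≤ (uF G P σ j : ℤ) - uF G P π j
      omega
    have hw0 : (0:ℤ) ≤ (w j : ℤ) := by positivity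
    show (w j : ℤ) ≤ (w j : ℤ) * Δ j
    nlinarith
  -- total
  have htot : 0 < ∑ k, f k := by
    have hij : ((Fintype.card A : ℤ)) * (2 * B) < (w i : ℤ) + (w j : ℤ) := by
      exact_mod_cast hwij
    linarith [hsum_rest, hfi, hfj, e2, e3]
  have hΦ : ((∑ k, w k * uF G P σ k : ℕ) : ℤ) - ((∑ k, w k * uF G P π k : ℕ) : ℤ)
      = ∑ k, f k := by
    push_cast
    rw [← Finset.sum_sub_distrib]
    exact Finset.sum_congr rfl (fun k _ => by simp only [hf, hΔ]; ring)
  have hfin : ((∑ k, w k * uF G P π k : ℕ) : ℤ) < ((∑ k, w k * uF G P σ k : ℕ) : ℤ) := by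
    linarith
  exact_mod_cast hfin

end Aux

/-- If some `X ⊆ A` is a directed feedback vertex set of `P` (the restriction
of `P` to `A \ X` has no directed cycle) and `|X|` is at most the number of leaves
(degree-one vertices) of the seat graph `G`, then a neighborhood stable assignment exists. -/
theorem stmt2 {A V : Type*} [Fintype A] [DecidableEq A] [Fintype V] [DecidableEq V]
    (G : SimpleGraph V) [DecidableRel G.Adj]
    (hcard : Fintype.card V = Fintype.card A)
    (P : A → A → Prop) (hP : Irreflexive P) (X : Set A)
    (hacyc : ∀ a : A, ¬ Relation.TransGen (fun a b => P a b ∧ a ∉ X ∧ b ∉ X) a a)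
    (hleaf : X.ncard ≤ Set.ncard {v : V | G.degree v = 1}) :
    ∃ π : A ≃ V, NeighborhoodStable G P π := by
  classical
  set n := Fintype.card A with hn
  set Q : A → A → Prop := fun a b => P a b ∧ a ∉ X ∧ b ∉ X with hQ
  have hrlt : ∀ a b : A, Q a b → rnk Q a < rnk Q b := fun a b h => rnk_lt Q hacyc h
  have hrinj : Function.Injective (rnk Q) := rnk_inj Q
  set r : A → ℕ := rnk Q with hr
  set M : ℕ := 2 * n + 1 with hM
  set w : A → ℕ := fun k => if k ∈ X then 0 else M ^ r k with hw
  set S : Finset (A ≃ V) := Finset.univ.filter (fun π => ∀ x ∈ X, G.degree (π x) = 1) with hS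
  -- S is nonempty: put the agents of X on leaves
  have hSne : S.Nonempty := by
    set Xf : Finset A := Finset.univ.filter (· ∈ X) with hXf
    set Lf : Finset V := Finset.univ.filter (fun v => G.degree v = 1) with hLf
    have hX1 : X.ncard = Xf.card := by
      rw [Set.ncard_eq_toFinset_card']
      congr 1
      ext a; simp [hXf, Set.mem_toFinset]
    have hL1 : Set.ncard {v : V | G.degree v = 1} = Lf.card := by
      rw [Set.ncard_eq_toFinset_card']
      congr 1
      ext v; simp [hLf, Set.mem_toFinset]
    have hXL : Xf.card ≤ Lf.card := by rw [← hX1, ← hL1]; exact hleaf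
    obtain ⟨T, hTsub, hTcard⟩ := Finset.exists_subset_card_eq hXL
    have hcne : Fintype.card {a // a ∈ Xf} = Fintype.card {v // v ∈ T} := by
      rw [Fintype.card_coe, Fintype.card_coe, hTcard]
    have hcc : Fintype.card {a // a ∉ Xf} = Fintype.card {v // v ∉ T} := by
      rw [Fintype.card_subtype_compl, Fintype.card_subtype_compl, Fintype.card_coe,
        Fintype.card_coe, hTcard, hcard]
    let e1 : {a // a ∈ Xf} ≃ {v // v ∈ T} := Fintype.equivOfCardEq hcne
    let e2 : {a // a ∉ Xf} ≃ {v // v ∉ T} := Fintype.equivOfCardEq hcc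
    let π0 : A ≃ V :=
      ((Equiv.sumCompl (· ∈ Xf)).symm.trans ((e1.sumCongr e2).trans (Equiv.sumCompl (· ∈ T))))
    refine ⟨π0, ?_⟩
    rw [hS, Finset.mem_filter]
    refine ⟨Finset.mem_univ _, fun x hx => ?_⟩
    have hxXf : x ∈ Xf := by simp [hXf, hx]
    have hval : π0 x = ((e1 ⟨x, hxXf⟩ : {v // v ∈ T}) : V) := by
      simp only [π0, Equiv.trans_apply]
      rw [Equiv.sumCompl_symm_apply_of_pos hxXf]
      simp
    have hmemT : ((e1 ⟨x, hxXf⟩ : {v // v ∈ T}) : V) ∈ T := (e1 ⟨x, hxXf⟩).2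
    have hmemL : π0 x ∈ Lf := hTsub (hval ▸ hmemT)
    rw [hLf, Finset.mem_filter] at hmemL
    exact hmemL.2
  obtain ⟨π, hπS, hπmax⟩ := Finset.exists_max_image S (fun π => ∑ k, w k * uF G P π k) hSne
  have hπleaf : ∀ x ∈ X, G.degree (π x) = 1 := by
    have := hπS
    rw [hS, Finset.mem_filter] at this
    exact this.2
  refine ⟨π, fun i j hb hadj => ?_⟩
  have hb' : envies G P π i j ∧ envies G P π j i := hb
  obtain ⟨hij, hji⟩ := hb'
  by_cases hiX : i ∈ X
  · exact no_envy_leaf G P π i j (hπleaf i hiX) hadj hji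
  by_cases hjX : j ∈ X
  · exact no_envy_leaf G P π j i (hπleaf j hjX) hadj.symm hij
  have hne : i ≠ j := by
    rintro rfl
    unfold envies at hij
    rw [Equiv.swap_self, Equiv.refl_trans] at hij
    exact lt_irrefl _ hij
  set σ : A ≃ V := (Equiv.swap i j).trans π with hσdef
  have hσS : σ ∈ S := by
    rw [hS, Finset.mem_filter]
    refine ⟨Finset.mem_univ _, fun x hx => ?_⟩
    have hxi : x ≠ i := fun h => hiX (h ▸ hx)
    have hxj : x ≠ j := fun h => hjX (h ▸ hx)
    have hx2 : σ x = π x := by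
      simp [hσdef, Equiv.trans_apply, Equiv.swap_apply_of_ne_of_ne hxi hxj]
    rw [hx2]; exact hπleaf x hx
  have hmax := hπmax σ hσS
  have hΔi : uF G P π i < uF G P σ i := by
    unfold envies at hij
    rwa [utility_eq_uF, utility_eq_uF] at hij
  have hΔj : uF G P π j < uF G P σ j := by
    unfold envies at hji
    rw [utility_eq_uF, utility_eq_uF, Equiv.swap_comm j i] at hji
    exact hji
  set ρ : ℕ := max (r i) (r j) with hρdef
  have hrij : r i ≠ r j := fun h => hne (hrinj h)
  have hle1 := le_max_left (r i) (r j)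
  have hle2 := le_max_right (r i) (r j)
  have hρ1 : 1 ≤ ρ := by
    rcases max_choice (r i) (r j) with h | h <;> omega
  have hwB : ∀ k, k ≠ i → k ≠ j → (P k i ∨ P k j) → w k ≤ M ^ (ρ - 1) := by
    intro k hki hkj hPk
    by_cases hkX : k ∈ X
    · rw [hw]
      simp only [if_pos hkX]
      exact Nat.zero_le _
    · have hrk : r k < ρ := by
        rcases hPk with h | h
        · exact lt_of_lt_of_le (hrlt k i ⟨h, hkX, hiX⟩) hle1
        · exact lt_of_lt_of_le (hrlt k j ⟨h, hkX, hjX⟩) hle2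
      rw [hw]
      simp only [if_neg hkX]
      exact Nat.pow_le_pow_right (by omega) (by omega)
  have hwij : n * (2 * M ^ (ρ - 1)) < w i + w j := by
    have hwi : w i = M ^ r i := by rw [hw]; simp only [if_neg hiX]
    have hwj : w j = M ^ r j := by rw [hw]; simp only [if_neg hjX]
    have hMρ : M ^ ρ = M ^ (ρ - 1) * M := by
      conv_lhs => rw [show ρ = (ρ - 1) + 1 by omega]
      rw [pow_succ]
    have hpos : 0 < M ^ (ρ - 1) := Nat.pow_pos (by omega)
    have h2n : n * (2 * M ^ (ρ - 1)) < M ^ ρ := by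
      rw [hMρ, hM]
      rw [hM] at hpos
      nlinarith
    rcases max_choice (r i) (r j) with h | h
    · calc n * (2 * M ^ (ρ - 1)) < M ^ ρ := h2n
        _ = M ^ r i := by rw [hρdef, h]
        _ = w i := hwi.symm
        _ ≤ w i + w j := Nat.le_add_right _ _
    · calc n * (2 * M ^ (ρ - 1)) < M ^ ρ := h2n
        _ = M ^ r j := by rw [hρdef, h]
        _ = w j := hwj.symm
        _ ≤ w j + w i := Nat.le_add_right _ _
        _ = w i + w j := Nat.add_comm _ _
  have hkey := key_lemma G P π i j hne w (M ^ (ρ - 1)) hΔi hΔj hwB hwij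
  exact absurd hmax (not_le.mpr hkey)
end

section
/- Let A be a finite set of agents with an irreflexive preference relation P that is acyclic (P contains no directed cycle; equivalently, its transitive closure is irreflexive), and let G be any simple seat graph on a vertex set of size |A|. Then there exists a stable assignment of the agents to the vertices of G, i.e., an assignment with no blocking pair at all. -/

private lemma ncard_le_of_subset_union_pair {V : Type*} [Fintype V] {S T : Set V} (a b : V)
    (h : S ⊆ T ∪ {a, b}) : S.ncard ≤ T.ncard + 2 := by
  classical
  have h2 : ({a, b} : Set V).ncard ≤ 2 := by
    have := Set.ncard_insert_le a ({b} : Set V)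
    simpa [Set.ncard_singleton] using this
  calc S.ncard ≤ (T ∪ {a, b}).ncard := Set.ncard_le_ncard h (Set.toFinite _)
    _ ≤ T.ncard + ({a, b} : Set V).ncard := Set.ncard_union_le _ _
    _ ≤ T.ncard + 2 := by omega

set_option maxHeartbeats 1000000 in
/-- If the preference relation `P` is acyclic (its transitive closure is
irreflexive), then for any seat graph `G` on `|A|` vertices there exists a stable
assignment, i.e., one with no blocking pair at all. -/
theorem stmt3 {A V : Type*} [Fintype A] [DecidableEq A] [Fintype V]
    (G : SimpleGraph V) (hcard : Fintype.card V = Fintype.card A)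
    (P : A → A → Prop) (hP : Irreflexive P)
    (hacyc : ∀ a : A, ¬ Relation.TransGen P a a) :
    ∃ π : A ≃ V, ∀ i j : A, ¬ blockingPair G P π i j := by
  classical
  have hAV : Nonempty (A ≃ V) := ⟨(Fintype.equivOfCardEq hcard).symm⟩
  set n := Fintype.card A with hn
  set r : A → ℕ := fun i => Set.ncard {j | Relation.TransGen P i j} with hrdef
  have hrlt : ∀ i j : A, P i j → r j < r i := by
    intro i j hij
    refine Set.ncard_lt_ncard ⟨fun x hx => (Relation.TransGen.single hij).trans hx,
      fun hsub => hacyc j (hsub (Relation.TransGen.single hij))⟩ (Set.toFinite _)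
  have hrn : ∀ i : A, r i < n := by
    intro i
    have h1 : {j | Relation.TransGen P i j} ⊂ Set.univ := by
      rw [Set.ssubset_univ_iff]
      intro h
      rw [Set.eq_univ_iff_forall] at h
      exact hacyc i (h i)
    calc r i < (Set.univ : Set A).ncard := Set.ncard_lt_ncard h1 Set.finite_univ
      _ = n := by rw [Set.ncard_univ, Nat.card_eq_fintype_card]
  set c : ℕ := 2 * n + 1 with hc
  set w : A → ℕ := fun i => c ^ (n - r i) with hw
  set Φ : (A ≃ V) → ℤ := fun π => ∑ k, (w k : ℤ) * (utility G P π k : ℤ) with hΦ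
  obtain ⟨π, hπ⟩ := Finite.exists_max Φ
  refine ⟨π, fun i j hbp => ?_⟩
  have hij : i ≠ j := by
    rintro rfl
    have h := hbp.1
    rw [envies, Equiv.swap_self, Equiv.refl_trans] at h
    exact lt_irrefl _ h
  set π' := (Equiv.swap i j).trans π with hπ'def
  have henvi : utility G P π i < utility G P π' i := hbp.1
  have henvj : utility G P π j < utility G P π' j := by
    have h := hbp.2
    rwa [envies, Equiv.swap_comm] at h
  have hπ'symm : ∀ v, π'.symm v = Equiv.swap i j (π.symm v) := by
    intro v
    simp [hπ'def, Equiv.symm_trans_apply]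
  have hπ'app : ∀ k, k ≠ i → k ≠ j → π' k = π k := by
    intro k hki hkj
    simp [hπ'def, Equiv.trans_apply, Equiv.swap_apply_of_ne_of_ne hki hkj]
  -- bystanders with no approval of i,j are unaffected
  have key0 : ∀ k, k ≠ i → k ≠ j → ¬ P k i → ¬ P k j →
      utility G P π' k = utility G P π k := by
    intro k hki hkj hpi hpj
    unfold utility
    congr 1
    ext v
    simp only [Set.mem_setOf_eq, hπ'app k hki hkj, hπ'symm]
    by_cases h1 : π.symm v = i
    · simp [h1, hpi, hpj]
    by_cases h2 : π.symm v = j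
    · simp [h2, hpi, hpj]
    · rw [Equiv.swap_apply_of_ne_of_ne h1 h2]
  -- bystanders change by at most 2
  have key2 : ∀ k, k ≠ i → k ≠ j → utility G P π k ≤ utility G P π' k + 2 := by
    intro k hki hkj
    refine ncard_le_of_subset_union_pair (π i) (π j) ?_
    intro v hv
    simp only [Set.mem_setOf_eq] at hv
    by_cases h1 : π.symm v = i
    · exact Or.inr (Or.inl (by rw [← h1, Equiv.apply_symm_apply]))
    by_cases h2 : π.symm v = j
    · exact Or.inr (Or.inr (by rw [← h2, Equiv.apply_symm_apply]; exact rfl))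
    · left
      refine ⟨by rw [hπ'app k hki hkj]; exact hv.1, ?_⟩
      rw [hπ'symm, Equiv.swap_apply_of_ne_of_ne h1 h2]
      exact hv.2
  -- the potential strictly increases: contradiction
  set m : ℕ := min (r i) (r j) with hm
  have hmn : m < n := lt_of_le_of_lt (min_le_left _ _) (hrn i)
  set B : ℕ := c ^ (n - m - 1) with hB
  have hB1 : (1 : ℕ) ≤ B := Nat.one_le_pow _ _ (by omega)
  have hpow : c ^ (n - m) = c * B := by
    have h1 : n - m = (n - m - 1) + 1 := by omega
    rw [h1, pow_succ, mul_comm]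
  have hwij : c ^ (n - m) ≤ w i + w j := by
    rcases le_total (r i) (r j) with h | h
    · rw [hm, min_eq_left h]; exact Nat.le_add_right _ _
    · rw [hm, min_eq_right h]; exact Nat.le_add_left _ _
  have hwbad : ∀ k : A, (P k i ∨ P k j) → w k ≤ B := by
    intro k hk
    have hrk : m < r k := by
      rcases hk with hk | hk
      · exact lt_of_le_of_lt (min_le_left _ _) (hrlt k i hk)
      · exact lt_of_le_of_lt (min_le_right _ _) (hrlt k j hk)
    exact Nat.pow_le_pow_right (by omega) (by omega)
  set f : A → ℤ := fun k => (w k : ℤ) * ((utility G P π' k : ℤ) - (utility G P π k : ℤ))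
    with hf
  have hsum : Φ π' - Φ π = ∑ k, f k := by
    rw [hΦ, ← Finset.sum_sub_distrib]
    congr 1
    ext k
    ring
  set s := (Finset.univ.erase i).erase j with hs
  have hsplit : ∑ k, f k = f i + (f j + ∑ k ∈ s, f k) := by
    rw [hs, Finset.add_sum_erase _ f (Finset.mem_erase.mpr ⟨hij.symm, Finset.mem_univ j⟩),
      Finset.add_sum_erase _ f (Finset.mem_univ i)]
  have hfi : (w i : ℤ) ≤ f i := by
    have h : (utility G P π i : ℤ) + 1 ≤ (utility G P π' i : ℤ) := by exact_mod_cast henvi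
    have hw0 : (0 : ℤ) ≤ (w i : ℤ) := Int.natCast_nonneg _
    simp only [hf]
    nlinarith
  have hfj : (w j : ℤ) ≤ f j := by
    have h : (utility G P π j : ℤ) + 1 ≤ (utility G P π' j : ℤ) := by exact_mod_cast henvj
    have hw0 : (0 : ℤ) ≤ (w j : ℤ) := Int.natCast_nonneg _
    simp only [hf]
    nlinarith
  have hfk : ∀ k ∈ s, -(2 * (B : ℤ)) ≤ f k := by
    intro k hk
    have hkj : k ≠ j := (Finset.mem_erase.mp hk).1
    have hki : k ≠ i := (Finset.mem_erase.mp (Finset.mem_erase.mp hk).2).1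
    by_cases hp : P k i ∨ P k j
    · have hwk : (w k : ℤ) ≤ (B : ℤ) := by exact_mod_cast hwbad k hp
      have hwk0 : (0 : ℤ) ≤ (w k : ℤ) := Int.natCast_nonneg _
      have hd : (utility G P π k : ℤ) ≤ (utility G P π' k : ℤ) + 2 := by
        exact_mod_cast key2 k hki hkj
      simp only [hf]
      nlinarith
    · push_neg at hp
      have := key0 k hki hkj hp.1 hp.2
      have hf0 : f k = 0 := by rw [hf]; simp [this]
      rw [hf0]
      have hB0 : (0 : ℤ) ≤ (B : ℤ) := Int.natCast_nonneg _
      linarith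
  have hcards : s.card ≤ n := by
    calc s.card ≤ Finset.univ.card := Finset.card_le_card (by
      intro x hx; exact Finset.mem_univ x)
    _ = n := Finset.card_univ
  have hsums : -((n : ℤ) * (2 * B)) ≤ ∑ k ∈ s, f k := by
    have h1 := Finset.card_nsmul_le_sum s f (-(2 * (B : ℤ))) hfk
    have h2 : (s.card : ℤ) • (-(2 * (B : ℤ))) = -((s.card : ℤ) * (2 * B)) := by
      rw [smul_eq_mul]; ring
    have h3 : -((n : ℤ) * (2 * B)) ≤ -((s.card : ℤ) * (2 * B)) := by
      have : (s.card : ℤ) ≤ n := by exact_mod_cast hcards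
      have hB0 : (0 : ℤ) ≤ 2 * (B : ℤ) := by positivity
      nlinarith
    calc -((n : ℤ) * (2 * B)) ≤ -((s.card : ℤ) * (2 * B)) := h3
      _ = (s.card : ℤ) • (-(2 * (B : ℤ))) := h2.symm
      _ ≤ ∑ k ∈ s, f k := by simpa using h1
  have hgain : (B : ℤ) ≤ ∑ k, f k := by
    have hwij0 : c * B ≤ w i + w j := hpow ▸ hwij
    have hwij1 : ((c : ℕ) : ℤ) * (B : ℤ) ≤ (w i : ℤ) + (w j : ℤ) := by exact_mod_cast hwij0
    have hc' : ((c : ℕ) : ℤ) = 2 * (n : ℤ) + 1 := by rw [hc]; push_cast; ring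
    rw [hc'] at hwij1
    rw [hsplit]
    linarith
  have hpos : Φ π < Φ π' := by
    have : (0 : ℤ) < B := by exact_mod_cast hB1
    have := hsum ▸ (lt_of_lt_of_le this hgain)
    linarith
  exact absurd (hπ π') (not_le.mpr hpos)
end

section
/- For every odd integer t ≥ 3, there exists an irreflexive preference relation P on a set A of 2t agents such that, when the seat graph is the complete bipartite graph K_{t,t} on 2t vertices, no assignment of the agents to the vertices is neighborhood stable. (Concretely, one may take the agents s_{i,j} for i ∈ {1,2}, j ∈ {1,…,t}, with arcs (s_{1,j}, s_{2,j}) and (s_{2,j}, s_{1,j}) for all j, and arcs (s_{i,j}, s_{i,j+1}) for all i ∈ {1,2} and all j, indices j taken modulo t.) -/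
/-! ### Auxiliary definitions -/

/-- partner of an agent: same column, other row -/
def pt {t : ℕ} (x : Fin 2 × ZMod t) : Fin 2 × ZMod t := (x.1 + 1, x.2)

/-- successor of an agent: same row, next column -/
def sc {t : ℕ} (x : Fin 2 × ZMod t) : Fin 2 × ZMod t := (x.1, x.2 + 1)

/-- the preference relation: approve your partner and your row-successor -/
def Pref (t : ℕ) : (Fin 2 × ZMod t) → (Fin 2 × ZMod t) → Prop :=
  fun i j => j = pt i ∨ j = sc i

lemma fin2_add_one_ne (r : Fin 2) : r + 1 ≠ r := by revert r; decide

lemma fin2_add_one_add_one (r : Fin 2) : r + 1 + 1 = r := by revert r; decide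

lemma pt_ne {t : ℕ} (x : Fin 2 × ZMod t) : pt x ≠ x := by
  intro h
  exact fin2_add_one_ne x.1 (congrArg Prod.fst h)

lemma sc_ne {t : ℕ} [Fact (1 < t)] (x : Fin 2 × ZMod t) : sc x ≠ x := by
  intro h
  have h2 : x.2 + 1 = x.2 := congrArg Prod.snd h
  have : (1 : ZMod t) = 0 := by
    have := add_eq_left.mp h2
    exact this
  exact one_ne_zero this

lemma pt_ne_sc {t : ℕ} (x : Fin 2 × ZMod t) : pt x ≠ sc x := by
  intro h
  exact fin2_add_one_ne x.1 (congrArg Prod.fst h)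

lemma pref_irrefl {t : ℕ} [Fact (1 < t)] : Irreflexive (Pref t) := by
  intro i h
  rcases h with h | h
  · exact pt_ne i h.symm
  · exact sc_ne i h.symm

lemma adj_iff {t : ℕ} (u v : Fin t ⊕ Fin t) :
    (completeBipartiteGraph (Fin t) (Fin t)).Adj u v ↔ u.isLeft ≠ v.isLeft := by
  cases u <;> cases v <;> simp

lemma ncard_pairset {t : ℕ} (u x y : Fin t ⊕ Fin t) (hxy : x ≠ y) :
    Set.ncard {v : Fin t ⊕ Fin t | (completeBipartiteGraph (Fin t) (Fin t)).Adj u v ∧ (v = x ∨ v = y)}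
      = (if u.isLeft ≠ x.isLeft then 1 else 0) + (if u.isLeft ≠ y.isLeft then 1 else 0) := by
  by_cases hx : u.isLeft ≠ x.isLeft <;> by_cases hy : u.isLeft ≠ y.isLeft
  · have hax : (completeBipartiteGraph (Fin t) (Fin t)).Adj u x := (adj_iff u x).mpr hx
    have hay : (completeBipartiteGraph (Fin t) (Fin t)).Adj u y := (adj_iff u y).mpr hy
    have hset : {v : Fin t ⊕ Fin t | (completeBipartiteGraph (Fin t) (Fin t)).Adj u v ∧ (v = x ∨ v = y)} = {x, y} := by
      ext v
      constructor
      · rintro ⟨-, rfl | rfl⟩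
        · exact Set.mem_insert _ _
        · exact Set.mem_insert_iff.mpr (Or.inr rfl)
      · rintro (rfl | rfl)
        · exact ⟨hax, Or.inl rfl⟩
        · exact ⟨hay, Or.inr rfl⟩
    rw [hset, Set.ncard_pair hxy, if_pos hx, if_pos hy]
  · have hax : (completeBipartiteGraph (Fin t) (Fin t)).Adj u x := (adj_iff u x).mpr hx
    have hay : ¬ (completeBipartiteGraph (Fin t) (Fin t)).Adj u y := fun h => hy ((adj_iff u y).mp h)
    have hset : {v : Fin t ⊕ Fin t | (completeBipartiteGraph (Fin t) (Fin t)).Adj u v ∧ (v = x ∨ v = y)} = {x} := by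
      ext v
      constructor
      · rintro ⟨ha, rfl | rfl⟩
        · rfl
        · exact absurd ha hay
      · rintro rfl
        exact ⟨hax, Or.inl rfl⟩
    rw [hset, Set.ncard_singleton, if_pos hx, if_neg hy]
  · have hax : ¬ (completeBipartiteGraph (Fin t) (Fin t)).Adj u x := fun h => hx ((adj_iff u x).mp h)
    have hay : (completeBipartiteGraph (Fin t) (Fin t)).Adj u y := (adj_iff u y).mpr hy
    have hset : {v : Fin t ⊕ Fin t | (completeBipartiteGraph (Fin t) (Fin t)).Adj u v ∧ (v = x ∨ v = y)} = {y} := by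
      ext v
      constructor
      · rintro ⟨ha, rfl | rfl⟩
        · exact absurd ha hax
        · rfl
      · rintro rfl
        exact ⟨hay, Or.inr rfl⟩
    rw [hset, Set.ncard_singleton, if_neg hx, if_pos hy]
  · have hax : ¬ (completeBipartiteGraph (Fin t) (Fin t)).Adj u x := fun h => hx ((adj_iff u x).mp h)
    have hay : ¬ (completeBipartiteGraph (Fin t) (Fin t)).Adj u y := fun h => hy ((adj_iff u y).mp h)
    have hset : {v : Fin t ⊕ Fin t | (completeBipartiteGraph (Fin t) (Fin t)).Adj u v ∧ (v = x ∨ v = y)} = ∅ := by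
      ext v
      constructor
      · rintro ⟨ha, rfl | rfl⟩
        · exact absurd ha hax
        · exact absurd ha hay
      · rintro ⟨⟩
    rw [hset, Set.ncard_empty, if_neg hx, if_neg hy]

lemma utility_formula {t : ℕ} {A : Type*} (π : A ≃ (Fin t ⊕ Fin t)) (P : A → A → Prop)
    (i p s : A) (hps : p ≠ s) (hP : ∀ z, P i z ↔ (z = p ∨ z = s)) :
    utility (completeBipartiteGraph (Fin t) (Fin t)) P π i
      = (if (π i).isLeft ≠ (π p).isLeft then 1 else 0)
        + (if (π i).isLeft ≠ (π s).isLeft then 1 else 0) := by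
  have hset : {v : Fin t ⊕ Fin t | (completeBipartiteGraph (Fin t) (Fin t)).Adj (π i) v ∧ P i (π.symm v)}
      = {v : Fin t ⊕ Fin t | (completeBipartiteGraph (Fin t) (Fin t)).Adj (π i) v ∧ (v = π p ∨ v = π s)} := by
    ext v
    simp only [Set.mem_setOf_eq, hP, Equiv.symm_apply_eq]
  rw [utility, hset, ncard_pairset _ _ _ (fun h => hps (π.injective h))]

lemma bool_ne_iff (a b p : Bool) (h : a ≠ b) : (b ≠ p) ↔ (p = a) := by
  revert a b p; decide

lemma envies_of {t : ℕ} [Fact (1 < t)] (π : (Fin 2 × ZMod t) ≃ (Fin t ⊕ Fin t))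
    (i j : Fin 2 × ZMod t) (hij : (π i).isLeft ≠ (π j).isLeft)
    (h : (if (π i).isLeft ≠ (π (pt i)).isLeft then 1 else 0)
          + (if (π i).isLeft ≠ (π (sc i)).isLeft then 1 else 0)
        < (if pt i = j then 1 else if (π (pt i)).isLeft = (π i).isLeft then 1 else 0)
          + (if sc i = j then 1 else if (π (sc i)).isLeft = (π i).isLeft then 1 else 0)) :
    envies (completeBipartiteGraph (Fin t) (Fin t)) (Pref t) π i j := by
  rw [envies, utility_formula π (Pref t) i (pt i) (sc i) (pt_ne_sc i) (fun z => Iff.rfl),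
    utility_formula ((Equiv.swap i j).trans π) (Pref t) i (pt i) (sc i) (pt_ne_sc i)
      (fun z => Iff.rfl)]
  have hii : ((Equiv.swap i j).trans π) i = π j := by
    rw [Equiv.trans_apply, Equiv.swap_apply_left]
  rw [hii]
  have hterm : ∀ x : Fin 2 × ZMod t, x ≠ i →
      (if (π j).isLeft ≠ ((((Equiv.swap i j).trans π)) x).isLeft then 1 else 0) =
        (if x = j then 1 else if (π x).isLeft = (π i).isLeft then 1 else 0) := by
    intro x hxi
    rw [Equiv.trans_apply]
    by_cases hxj : x = j
    · subst hxj
      rw [Equiv.swap_apply_right, if_pos rfl, if_pos (Ne.symm hij)]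
    · rw [Equiv.swap_apply_of_ne_of_ne hxi hxj, if_neg hxj,
        if_congr (bool_ne_iff _ _ _ hij) rfl rfl]
  rw [hterm (pt i) (pt_ne i), hterm (sc i) (sc_ne i)]
  exact h

section Evariants
variable {t : ℕ} [Fact (1 < t)] (π : (Fin 2 × ZMod t) ≃ (Fin t ⊕ Fin t))

/-- An agent both of whose approved agents sit on its own side envies anyone across. -/
lemma E1 (i j : Fin 2 × ZMod t)
    (hp : (π (pt i)).isLeft = (π i).isLeft) (hs : (π (sc i)).isLeft = (π i).isLeft)
    (hij : (π i).isLeft ≠ (π j).isLeft) :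
    envies (completeBipartiteGraph (Fin t) (Fin t)) (Pref t) π i j := by
  apply envies_of π i j hij
  rw [if_neg (by rw [hp]; exact fun h => h rfl), if_neg (by rw [hs]; exact fun h => h rfl)]
  have h1 : (if pt i = j then 1 else if (π (pt i)).isLeft = (π i).isLeft then 1 else 0) = 1 := by
    by_cases h : pt i = j
    · rw [if_pos h]
    · rw [if_neg h, if_pos hp]
  rw [h1]
  omega

/-- An agent whose partner sits across but whose successor sits on its own side
envies the partner. -/
lemma E2 (i : Fin 2 × ZMod t)
    (hp : (π i).isLeft ≠ (π (pt i)).isLeft) (hs : (π (sc i)).isLeft = (π i).isLeft) :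
    envies (completeBipartiteGraph (Fin t) (Fin t)) (Pref t) π i (pt i) := by
  apply envies_of π i (pt i) hp
  rw [if_pos hp, if_neg (by rw [hs]; exact fun h => h rfl), if_pos rfl,
    if_neg (fun h : sc i = pt i => pt_ne_sc i h.symm), if_pos hs]
  omega

/-- An agent whose successor sits across but whose partner sits on its own side
envies the successor. -/
lemma E3 (i : Fin 2 × ZMod t)
    (hp : (π (pt i)).isLeft = (π i).isLeft) (hs : (π i).isLeft ≠ (π (sc i)).isLeft) :
    envies (completeBipartiteGraph (Fin t) (Fin t)) (Pref t) π i (sc i) := by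
  apply envies_of π i (sc i) hs
  rw [if_pos hs, if_neg (by rw [hp]; exact fun h => h rfl), if_pos rfl,
    if_neg (pt_ne_sc i), if_pos hp]
  omega

end Evariants

lemma bool_eq_of_ne (x y c : Bool) (hx : x ≠ c) (hy : y ≠ c) : x = y := by
  revert x y c; decide

lemma bool_ne_of_eq_not (x c : Bool) (h : x = !c) : x ≠ c := by
  revert x c; decide

lemma bool_eq_not_of_ne (x y : Bool) (h : x ≠ y) : x = !y := by
  revert x y; decide

lemma bool_of_ne_not (x c : Bool) (h : x ≠ !c) : x = c := by
  revert x c; decide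

lemma bool_of_not_eq_not (x y : Bool) (h : ¬ (x = !y)) : x = y := by
  revert x y; decide

lemma bool_not_self (x : Bool) (h : x = !x) : False := by
  revert x; decide

lemma fin2_zero_add_one : (0 : Fin 2) + 1 = 1 := by decide

lemma fin2_one_add_one : (1 : Fin 2) + 1 = 0 := by decide

lemma pt_mk {t : ℕ} (r : Fin 2) (j : ZMod t) : pt (r, j) = (r + 1, j) := rfl

lemma sc_mk {t : ℕ} (r : Fin 2) (j : ZMod t) : sc (r, j) = (r, j + 1) := rfl

/-- For every odd integer `t ≥ 3` there is an irreflexive preference relation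
on `2t` agents such that no assignment onto the complete bipartite seat graph `K_{t,t}`
is neighborhood stable. -/
theorem stmt4 (t : ℕ) (ht : 3 ≤ t) (hodd : Odd t) :
    ∃ P : (Fin 2 × ZMod t) → (Fin 2 × ZMod t) → Prop, Irreflexive P ∧
      ∀ π : (Fin 2 × ZMod t) ≃ (Fin t ⊕ Fin t),
        ¬ NeighborhoodStable (completeBipartiteGraph (Fin t) (Fin t)) P π := by
  haveI : NeZero t := ⟨by omega⟩
  haveI : Fact (1 < t) := ⟨by omega⟩
  refine ⟨Pref t, pref_irrefl, ?_⟩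
  intro π hNS
  have noblock : ∀ i j : Fin 2 × ZMod t, (π i).isLeft ≠ (π j).isLeft →
      envies (completeBipartiteGraph (Fin t) (Fin t)) (Pref t) π i j →
      envies (completeBipartiteGraph (Fin t) (Fin t)) (Pref t) π j i → False := by
    intro i j hij h1 h2
    exact hNS i j ⟨h1, h2⟩ ((adj_iff _ _).mpr hij)
  -- all doubly-satisfied agents sit on one common side `c`
  obtain ⟨c, hc⟩ : ∃ c : Bool, ∀ x : Fin 2 × ZMod t,
      (π (pt x)).isLeft = (π x).isLeft → (π (sc x)).isLeft = (π x).isLeft →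
      (π x).isLeft = c := by
    by_cases h : ∃ x : Fin 2 × ZMod t,
        (π (pt x)).isLeft = (π x).isLeft ∧ (π (sc x)).isLeft = (π x).isLeft
    · obtain ⟨x₀, h1, h2⟩ := h
      refine ⟨(π x₀).isLeft, fun x hxp hxs => ?_⟩
      by_contra hne
      exact noblock x x₀ hne (E1 π x x₀ hxp hxs hne) (E1 π x₀ x h1 h2 (Ne.symm hne))
    · exact ⟨true, fun x hxp hxs => absurd ⟨x, hxp, hxs⟩ h⟩
  -- K1 : a column fully off side `c` forces the next (same-row) seat onto side `c`
  have hK1 : ∀ (r : Fin 2) (j : ZMod t), (π (r, j)).isLeft ≠ c →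
      (π (r + 1, j)).isLeft ≠ c → (π (r, j + 1)).isLeft = c := by
    intro r j h0 h1
    by_contra hS
    have hpt : (π (pt (r, j))).isLeft = (π (r, j)).isLeft := by
      rw [pt_mk]; exact bool_eq_of_ne _ _ c h1 h0
    have hsc : (π (sc (r, j))).isLeft = (π (r, j)).isLeft := by
      rw [sc_mk]; exact bool_eq_of_ne _ _ c hS h0
    exact h0 (hc _ hpt hsc)
  -- K3 : a column fully off side `c` propagates two columns ahead
  have hK3 : ∀ (r : Fin 2) (j : ZMod t), (π (r, j)).isLeft ≠ c →
      (π (r + 1, j)).isLeft ≠ c → (π (r, j + 1 + 1)).isLeft ≠ c := by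
    intro r j h0 h1 hS
    have ha : (π (r, j + 1)).isLeft = c := hK1 r j h0 h1
    have hb : (π (r + 1, j + 1)).isLeft = c := by
      apply hK1 (r + 1) j h1
      rw [fin2_add_one_add_one]; exact h0
    have hside : (π (r, j)).isLeft ≠ (π (r, j + 1)).isLeft := by
      rw [ha]; exact h0
    apply noblock (r, j) (r, j + 1) hside
    · have h3 := E3 π (r, j)
        (by rw [pt_mk]; exact bool_eq_of_ne _ _ c h1 h0)
        (by rw [sc_mk]; exact hside)
      rw [sc_mk] at h3
      exact h3
    · apply E1 π (r, j + 1) (r, j)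
      · rw [pt_mk, hb, ha]
      · rw [sc_mk, ha, hS]
      · exact Ne.symm hside
  -- no column lies fully off side `c`
  have hTT : ∀ j : ZMod t,
      ¬ ((π ((0 : Fin 2), j)).isLeft ≠ c ∧ (π ((1 : Fin 2), j)).isLeft ≠ c) := by
    rintro j ⟨h0, h1⟩
    have key : ∀ m : ℕ, (π ((0 : Fin 2), j + ((2 * m : ℕ) : ZMod t))).isLeft ≠ c ∧
        (π ((1 : Fin 2), j + ((2 * m : ℕ) : ZMod t))).isLeft ≠ c := by
      intro m
      induction m with
      | zero => simpa using ⟨h0, h1⟩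
      | succ n ih =>
        have e : (j + ((2 * (n + 1) : ℕ) : ZMod t)) = (j + ((2 * n : ℕ) : ZMod t)) + 1 + 1 := by
          push_cast; ring
        rw [e]
        constructor
        · exact hK3 0 _ ih.1 (by rw [fin2_zero_add_one]; exact ih.2)
        · exact hK3 1 _ ih.2 (by rw [fin2_one_add_one]; exact ih.1)
    obtain ⟨k, hk⟩ := hodd
    have h2m : ((2 * (k + 1) : ℕ) : ZMod t) = 1 := by
      have e2 : 2 * (k + 1) = t + 1 := by omega
      rw [e2]
      push_cast [ZMod.natCast_self]
      ring
    have hkey := (key (k + 1)).1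
    rw [h2m] at hkey
    exact hkey (hK1 0 j h0 (by rw [fin2_zero_add_one]; exact h1))
  -- counting : each side holds exactly `t` agents
  have hcard : ∀ d : Bool,
      (∑ x : Fin 2 × ZMod t, if (π x).isLeft = d then (1 : ℕ) else 0) = t := by
    intro d
    calc (∑ x : Fin 2 × ZMod t, if (π x).isLeft = d then (1 : ℕ) else 0)
        = ∑ v : Fin t ⊕ Fin t, (if v.isLeft = d then (1 : ℕ) else 0) :=
          Equiv.sum_comp π (fun v => if v.isLeft = d then (1 : ℕ) else 0)
      _ = t := by
          rw [Fintype.sum_sum_type]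
          cases d <;> simp
  have hsum1 : (∑ j : ZMod t,
      ((if (π ((0 : Fin 2), j)).isLeft = !c then (1 : ℕ) else 0)
        + (if (π ((1 : Fin 2), j)).isLeft = !c then (1 : ℕ) else 0))) = t := by
    calc (∑ j : ZMod t,
        ((if (π ((0 : Fin 2), j)).isLeft = !c then (1 : ℕ) else 0)
          + (if (π ((1 : Fin 2), j)).isLeft = !c then (1 : ℕ) else 0)))
        = ∑ x : Fin 2 × ZMod t, (if (π x).isLeft = !c then (1 : ℕ) else 0) := by
          rw [Fintype.sum_prod_type_right]
          exact Finset.sum_congr rfl fun j _ =>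
            (Fin.sum_univ_two (f := fun x : Fin 2 =>
              if (π (x, j)).isLeft = !c then (1 : ℕ) else 0)).symm
      _ = t := hcard (!c)
  have hle : ∀ j : ZMod t,
      ((if (π ((0 : Fin 2), j)).isLeft = !c then (1 : ℕ) else 0)
        + (if (π ((1 : Fin 2), j)).isLeft = !c then (1 : ℕ) else 0)) ≤ 1 := by
    intro j
    by_cases h0 : (π ((0 : Fin 2), j)).isLeft = !c <;>
      by_cases h1 : (π ((1 : Fin 2), j)).isLeft = !c
    · exact absurd ⟨bool_ne_of_eq_not _ _ h0, bool_ne_of_eq_not _ _ h1⟩ (hTT j)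
    all_goals simp [h0, h1]
  have hone : ∀ j : ZMod t,
      ((if (π ((0 : Fin 2), j)).isLeft = !c then (1 : ℕ) else 0)
        + (if (π ((1 : Fin 2), j)).isLeft = !c then (1 : ℕ) else 0)) = 1 := by
    intro j
    by_contra hne
    have hlt : ((if (π ((0 : Fin 2), j)).isLeft = !c then (1 : ℕ) else 0)
        + (if (π ((1 : Fin 2), j)).isLeft = !c then (1 : ℕ) else 0)) < 1 :=
      lt_of_le_of_ne (hle j) hne
    have hstrict := Finset.sum_lt_sum (fun i (_ : i ∈ Finset.univ) => hle i)
      ⟨j, Finset.mem_univ j, hlt⟩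
    rw [hsum1] at hstrict
    simp only [Finset.sum_const, Finset.card_univ, smul_eq_mul, mul_one] at hstrict
    rw [ZMod.card] at hstrict
    omega
  -- hence every column is split
  have hsplit : ∀ j : ZMod t,
      (π ((0 : Fin 2), j)).isLeft ≠ (π ((1 : Fin 2), j)).isLeft := by
    intro j
    have h := hone j
    by_cases h0 : (π ((0 : Fin 2), j)).isLeft = !c <;>
      by_cases h1 : (π ((1 : Fin 2), j)).isLeft = !c
    · exact absurd ⟨bool_ne_of_eq_not _ _ h0, bool_ne_of_eq_not _ _ h1⟩ (hTT j)
    · rw [h0, bool_of_ne_not _ _ h1]; exact bool_ne_of_eq_not _ _ rfl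
    · rw [bool_of_ne_not _ _ h0, h1]; exact Ne.symm (bool_ne_of_eq_not _ _ rfl)
    · rw [if_neg h0, if_neg h1] at h; omega
  -- hence row 0 flips side at every step
  have hflip : ∀ j : ZMod t,
      (π ((0 : Fin 2), j + 1)).isLeft = !(π ((0 : Fin 2), j)).isLeft := by
    intro j
    by_contra hcon
    have ha : (π ((0 : Fin 2), j + 1)).isLeft = (π ((0 : Fin 2), j)).isLeft :=
      bool_of_not_eq_not _ _ hcon
    by_cases hb : (π ((1 : Fin 2), j + 1)).isLeft = (π ((1 : Fin 2), j)).isLeft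
    · apply noblock ((0 : Fin 2), j) ((1 : Fin 2), j) (hsplit j)
      · have e : pt ((0 : Fin 2), j) = ((1 : Fin 2), j) := by
          rw [pt_mk, fin2_zero_add_one]
        have h2 := E2 π ((0 : Fin 2), j)
          (by rw [e]; exact hsplit j) (by rw [sc_mk]; exact ha)
        rw [e] at h2
        exact h2
      · have e : pt ((1 : Fin 2), j) = ((0 : Fin 2), j) := by
          rw [pt_mk, fin2_one_add_one]
        have h2 := E2 π ((1 : Fin 2), j)
          (by rw [e]; exact Ne.symm (hsplit j)) (by rw [sc_mk]; exact hb)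
        rw [e] at h2
        exact h2
    · apply hsplit (j + 1)
      rw [ha, bool_eq_not_of_ne _ _ hb]
      exact bool_eq_not_of_ne _ _ (hsplit j)
  -- parity contradiction around the odd cycle
  have hiter : ∀ n : ℕ, (π ((0 : Fin 2), ((n : ℕ) : ZMod t))).isLeft
      = (if Even n then (π ((0 : Fin 2), (0 : ZMod t))).isLeft
          else !(π ((0 : Fin 2), (0 : ZMod t))).isLeft) := by
    intro n
    induction n with
    | zero => simp
    | succ n ih =>
      have e : ((n + 1 : ℕ) : ZMod t) = ((n : ℕ) : ZMod t) + 1 := by push_cast; ring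
      rw [e, hflip, ih]
      rcases Nat.even_or_odd n with he | ho
      · rw [if_pos he, if_neg (by simp [Nat.even_add_one, he])]
      · have hne : ¬ Even n := by
          rcases ho with ⟨k, hk⟩
          rintro ⟨r, hr⟩
          omega
        rw [if_neg hne, if_pos (by simp [Nat.even_add_one, hne]), Bool.not_not]
  have ht0 := hiter t
  rw [ZMod.natCast_self] at ht0
  have hnev : ¬ Even t := by
    rcases hodd with ⟨k, hk⟩
    rintro ⟨r, hr⟩
    omega
  rw [if_neg hnev] at ht0
  exact bool_not_self _ ht0
end

section
/- Let A be a set of n ≥ 3 agents with an irreflexive preference relation P, with the seat graph being the cycle C_n. Let π be an assignment and let i be an index modulo n. If the agent seated at v_i approves the agent seated at v_{i-1}, then the agent seated at v_i does not envy the agent seated at v_{i+1}; symmetrically, if the agent seated at v_i approves the agent seated at v_{i+1}, then the agent seated at v_i does not envy the agent seated at v_{i-1}. -/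
lemma key {A : Type*} [DecidableEq A] {n : ℕ} (hn : 3 ≤ n)
    (P : A → A → Prop) (π : A ≃ ZMod n) (i d : ZMod n) (hd : d = 1 ∨ d = -1)
    (hpre : P (π.symm i) (π.symm (i + d))) :
    ¬ envies (cycleSeatGraph n) P π (π.symm i) (π.symm (i - d)) := by
  intro henv
  haveI : NeZero n := ⟨by omega⟩
  have h1 : (1 : ZMod n) ≠ 0 := by
    intro h
    have hdvd : n ∣ 1 := (ZMod.natCast_eq_zero_iff 1 n).mp (by exact_mod_cast h)
    have := Nat.le_of_dvd one_pos hdvd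
    omega
  have h2 : (2 : ZMod n) ≠ 0 := by
    intro h
    have hdvd : n ∣ 2 := (ZMod.natCast_eq_zero_iff 2 n).mp (by exact_mod_cast h)
    have := Nat.le_of_dvd two_pos hdvd
    omega
  have hd0 : d ≠ 0 := by
    rcases hd with rfl | rfl
    · exact h1
    · exact neg_ne_zero.mpr h1
  set a := π.symm i with ha
  set b := π.symm (i - d) with hb
  have hab : a ≠ b := by
    intro h
    apply hd0
    have h2' : i = i - d := by
      have := congrArg π h
      simpa [ha, hb] using this
    linear_combination h2'
  have hπa : π a = i := π.apply_symm_apply i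
  have hπ'a : ((Equiv.swap a b).trans π) a = i - d := by
    simp [Equiv.trans_apply, Equiv.swap_apply_left, hb]
  unfold envies utility at henv
  rw [hπa, hπ'a] at henv
  have hSfin : {v : ZMod n | (cycleSeatGraph n).Adj i v ∧ P a (π.symm v)}.Finite := by
    apply Set.Finite.subset (Set.toFinite {i + 1, i - 1})
    rintro v ⟨hadj, -⟩
    rw [cycleSeatGraph, SimpleGraph.fromRel_adj] at hadj
    rcases hadj.2 with h | h
    · exact Or.inl h
    · right; simp only [Set.mem_singleton_iff]; linear_combination -h
  have hmap : ∀ v ∈ {v : ZMod n | (cycleSeatGraph n).Adj (i - d) v ∧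
      P a (((Equiv.swap a b).trans π).symm v)},
      (fun v => 2 * i - d - v) v ∈ {v : ZMod n | (cycleSeatGraph n).Adj i v ∧ P a (π.symm v)} := by
    rintro v ⟨hadj, hPv⟩
    rw [cycleSeatGraph, SimpleGraph.fromRel_adj] at hadj
    have hv : v = i ∨ v = i - 2 * d := by
      rcases hd with rfl | rfl <;> rcases hadj.2 with h | h
      · left; linear_combination h
      · right; linear_combination -h
      · right; linear_combination h
      · left; linear_combination -h
    simp only [Set.mem_setOf_eq]
    rcases hv with hv | hv
    · -- v = i : maps to i - d, occupant there (after swap) is b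
      have hfv : 2 * i - d - v = i - d := by rw [hv]; ring
      have hPb : P a b := by
        have heq : ((Equiv.swap a b).trans π).symm v = b := by
          rw [hv]
          simp only [Equiv.symm_trans_apply]
          rw [Equiv.symm_swap, Equiv.swap_apply_left]
        rwa [heq] at hPv
      rw [hfv]
      refine ⟨?_, ?_⟩
      · rw [cycleSeatGraph, SimpleGraph.fromRel_adj]
        constructor
        · intro h; exact hd0 (by linear_combination h)
        · rcases hd with rfl | rfl
          · right; ring
          · left; ring
      · rw [← hb]; exact hPb
    · -- v = i - 2d : maps to i + d, occupant unchanged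
      have hfv : 2 * i - d - v = i + d := by rw [hv]; ring
      rw [hfv]
      refine ⟨?_, ?_⟩
      · rw [cycleSeatGraph, SimpleGraph.fromRel_adj]
        constructor
        · intro h; exact hd0 (by linear_combination -h)
        · rcases hd with rfl | rfl
          · left; rfl
          · right; ring
      · exact hpre
  have hinj : Set.InjOn (fun v : ZMod n => 2 * i - d - v)
      {v : ZMod n | (cycleSeatGraph n).Adj (i - d) v ∧
        P a (((Equiv.swap a b).trans π).symm v)} := by
    intro x _ y _ h
    simpa using sub_right_injective h
  have hle := Set.ncard_le_ncard_of_injOn _ hmap hinj hSfin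
  omega

/-- Observation 2: On the cycle `C_n`, if the agent at `v_i` approves the
agent at `v_{i-1}` then it does not envy the agent at `v_{i+1}`; symmetrically, if it
approves the agent at `v_{i+1}` then it does not envy the agent at `v_{i-1}`. -/
theorem stmt6 {A : Type*} [Fintype A] [DecidableEq A] {n : ℕ} (hn : 3 ≤ n)
    (hcard : Fintype.card A = n) (P : A → A → Prop) (hP : Irreflexive P)
    (π : A ≃ ZMod n) (i : ZMod n) :
    (P (π.symm i) (π.symm (i - 1)) →
      ¬ envies (cycleSeatGraph n) P π (π.symm i) (π.symm (i + 1))) ∧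
    (P (π.symm i) (π.symm (i + 1)) →
      ¬ envies (cycleSeatGraph n) P π (π.symm i) (π.symm (i - 1))) := by
  constructor
  · intro hpre
    have h := key hn P π i (-1) (Or.inr rfl) (by simpa [sub_eq_add_neg] using hpre)
    simpa [sub_neg_eq_add] using h
  · intro hpre
    exact key hn P π i 1 (Or.inl rfl) hpre
end

section
/- Let D be a finite directed graph with the property that for every vertex w and every two distinct in-neighbors s and t of w (i.e., s → w and t → w), there is an arc s → t or an arc t → s. Let s_1 → s_2 → ⋯ → s_r be a directed path in D (with distinct vertices) and let s be a vertex not on the path such that s → s_r. Then either s → s_1, or there exists an index j with 1 ≤ j ≤ r−1 such that s_j → s and s → s_{j+1}. -/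
/-- Claim 1: In a finite digraph where any two distinct in-neighbors of a
common vertex are joined by an arc, given a directed path `p 0 → p 1 → ⋯ → p (r-1)` and a
vertex `s` off the path with `s → p (r-1)`, either `s → p 0`, or `s` can be inserted:
`p j → s → p (j+1)` for some `j`. -/
theorem stmt7 {V : Type*} [Fintype V] (R : V → V → Prop) (hR : Irreflexive R)
    (hcond : ∀ w s t : V, s ≠ t → R s w → R t w → R s t ∨ R t s)
    (r : ℕ) (hr : 1 ≤ r) (p : ℕ → V)
    (hinj : ∀ i j, i < r → j < r → p i = p j → i = j)
    (hpath : ∀ i, i + 1 < r → R (p i) (p (i + 1)))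
    (s : V) (hs : ∀ i, i < r → s ≠ p i)
    (hlast : R s (p (r - 1))) :
    R s (p 0) ∨ ∃ j, j + 1 < r ∧ R (p j) s ∧ R s (p (j + 1)) := by
  classical
  have hex : ∃ i, i < r ∧ R s (p i) := ⟨r - 1, Nat.sub_lt hr one_pos, hlast⟩
  set i := Nat.find hex with hidef
  obtain ⟨hir, hRi⟩ : i < r ∧ R s (p i) := Nat.find_spec hex
  rcases Nat.eq_zero_or_pos i with h0 | hpos
  · exact Or.inl (h0 ▸ hRi)
  · right
    obtain ⟨k, hk⟩ : ∃ k, i = k + 1 := ⟨i - 1, by omega⟩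
    rw [hk] at hir hRi
    refine ⟨k, hir, ?_, hRi⟩
    have hpk : R (p k) (p (k + 1)) := hpath k hir
    have hne : s ≠ p k := hs k (Nat.lt_of_succ_lt hir)
    rcases hcond (p (k + 1)) s (p k) hne hRi hpk with h | h
    · exfalso
      exact Nat.find_min hex (m := k) (by omega) ⟨Nat.lt_of_succ_lt hir, h⟩
    · exact h
end

section
/- Let A be a set of n ≥ 3 agents with an irreflexive preference relation P satisfying: for every agent w and every two distinct agents s, t that both approve w, either s approves t or t approves s. Let {P_1, …, P_k} be a minimal path partition of the preference graph and let π = Φ(P_1, …, P_k) be the corresponding assignment on the cycle seat graph C_n. If under π some blocking pair occupies adjacent vertices of C_n, then there exists a minimal path partition {P'_1, …, P'_{k'}} whose corresponding assignment ρ = Φ(P'_1, …, P'_{k'}) satisfies: the number of indices j (modulo n) such that the agent seated at v_j under ρ approves the agent seated at v_{j+1} under ρ is at least one more than the corresponding number for π. -/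
/-- A path partition of the agents under preference relation `P`: a list of directed
paths (nonempty, `P`-chained lists of agents) whose concatenation contains every agent
exactly once. -/
structure PathPartition (A : Type*) (P : A → A → Prop) where
  paths : List (List A)
  nonempty : ∀ l ∈ paths, l ≠ []
  chains : ∀ l ∈ paths, l.Chain' P
  nodup : paths.flatten.Nodup
  complete : ∀ a : A, a ∈ paths.flatten

/-- A path partition is minimal if the tail of one path never approves the head of
another path. -/
def PathPartition.Minimal {A : Type*} {P : A → A → Prop} (pp : PathPartition A P) : Prop :=
  ∀ i j : Fin pp.paths.length, i ≠ j →
    ∀ x ∈ (pp.paths.get i).getLast?, ∀ y ∈ (pp.paths.get j).head?, ¬ P x y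

/-- `π` is the assignment `Φ(P_1, …, P_k)`: the `k`-th agent (0-based) along the
concatenation of the paths is seated at vertex `k` of the cycle `C_n`. -/
def IsPhi {A : Type*} {P : A → A → Prop} (n : ℕ) (pp : PathPartition A P)
    (π : A ≃ ZMod n) : Prop :=
  ∀ k : Fin pp.paths.flatten.length, π (pp.paths.flatten.get k) = ((k : ℕ) : ZMod n)


set_option linter.unusedSectionVars false


section Counting
variable {A : Type*} (P : A → A → Prop) (a₀ : A)

/-- indicator of `P x y` -/
noncomputable def pind (x y : A) : ℕ := @ite _ (P x y) (Classical.dec _) 1 0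

lemma pind_pos {x y : A} (h : P x y) : pind P x y = 1 := by simp [pind, h]
lemma pind_neg {x y : A} (h : ¬ P x y) : pind P x y = 0 := by simp [pind, h]
lemma pind_le_one (x y : A) : pind P x y ≤ 1 := by
  by_cases h : P x y <;> simp [pind, h]
lemma pind_eq_ite (x y : A) [Decidable (P x y)] :
    pind P x y = if P x y then 1 else 0 := by
  by_cases h : P x y <;> simp [pind, h]

/-- number of adjacent approvals along a list -/
noncomputable def linCount (L : List A) : ℕ :=
  ∑ t ∈ Finset.range (L.length - 1), pind P (L.getD t a₀) (L.getD (t+1) a₀)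

/-- number of adjacent approvals cyclically -/
noncomputable def cycCount (L : List A) : ℕ :=
  ∑ t ∈ Finset.range L.length, pind P (L.getD t a₀) (L.getD ((t+1) % L.length) a₀)

lemma cycCount_eq (L : List A) (hL : L ≠ []) :
    cycCount P a₀ L = linCount P a₀ L
      + pind P (L.getD (L.length - 1) a₀) (L.getD 0 a₀) := by
  have h1 : 1 ≤ L.length := List.length_pos_iff.2 hL
  have hsplit : L.length = (L.length - 1) + 1 := by omega
  rw [cycCount, hsplit, Finset.sum_range_succ]
  congr 1
  · apply Finset.sum_congr rfl
    intro t ht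
    simp only [Finset.mem_range] at ht
    rw [Nat.mod_eq_of_lt (by omega)]
  · rw [Nat.sub_add_cancel h1, Nat.mod_self]

lemma linCount_le (L : List A) : linCount P a₀ L ≤ L.length - 1 := by
  calc linCount P a₀ L ≤ ∑ _t ∈ Finset.range (L.length - 1), 1 :=
        Finset.sum_le_sum (fun t _ => pind_le_one P _ _)
    _ = L.length - 1 := by simp

lemma linCount_chain (L : List A) (hc : L.Chain' P) :
    linCount P a₀ L = L.length - 1 := by
  have h : ∀ t ∈ Finset.range (L.length - 1),
      pind P (L.getD t a₀) (L.getD (t+1) a₀) = 1 := by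
    intro t ht
    simp only [Finset.mem_range] at ht
    have := List.isChain_iff_getElem.1 hc t (by omega)
    rw [List.getD_eq_getElem _ _ (by omega), List.getD_eq_getElem _ _ (by omega)]
    exact pind_pos P this
  rw [linCount, Finset.sum_congr rfl h, Finset.sum_const, smul_eq_mul, mul_one,
    Finset.card_range]

lemma linCount_append (L M : List A) (hL : L ≠ []) (hM : M ≠ []) :
    linCount P a₀ (L ++ M) = linCount P a₀ L
      + pind P (L.getD (L.length - 1) a₀) (M.getD 0 a₀) + linCount P a₀ M := by
  have h1 : 1 ≤ L.length := List.length_pos_iff.2 hL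
  have h2 : 1 ≤ M.length := List.length_pos_iff.2 hM
  have hsplit : (L ++ M).length - 1 = (L.length - 1) + (1 + (M.length - 1)) := by
    simp only [List.length_append]; omega
  rw [linCount, hsplit, Finset.sum_range_add, Finset.sum_range_add]
  simp only [Finset.sum_range_one, Nat.add_zero]
  have e1 : ∑ t ∈ Finset.range (L.length - 1),
      pind P ((L ++ M).getD t a₀) ((L ++ M).getD (t+1) a₀) = linCount P a₀ L := by
    apply Finset.sum_congr rfl
    intro t ht
    simp only [Finset.mem_range] at ht
    rw [List.getD_append _ _ _ _ (by omega), List.getD_append _ _ _ _ (by omega)]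
  have e2 : pind P ((L ++ M).getD (L.length - 1) a₀) ((L ++ M).getD (L.length - 1 + 1) a₀)
      = pind P (L.getD (L.length - 1) a₀) (M.getD 0 a₀) := by
    rw [List.getD_append _ _ _ _ (by omega),
        List.getD_append_right _ _ _ _ (by omega)]
    congr 2
    omega
  have e3 : ∑ t ∈ Finset.range (M.length - 1),
      pind P ((L ++ M).getD (L.length - 1 + (1 + t)) a₀)
        ((L ++ M).getD (L.length - 1 + (1 + t) + 1) a₀) = linCount P a₀ M := by
    apply Finset.sum_congr rfl
    intro t ht
    simp only [Finset.mem_range] at ht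
    rw [List.getD_append_right _ _ _ _ (by omega),
        List.getD_append_right _ _ _ _ (by omega)]
    congr 2 <;> omega
  rw [e1, e2, e3]
  omega

lemma length_le_flatten_length (LL : List (List A)) (hne : ∀ l ∈ LL, l ≠ []) :
    LL.length ≤ LL.flatten.length := by
  induction LL with
  | nil => simp
  | cons L rest ih =>
    have hL : L ≠ [] := hne L (by simp)
    have h1 : 1 ≤ L.length := List.length_pos_iff.2 hL
    have := ih (fun l hl => hne l (by simp [hl]))
    simp only [List.flatten_cons, List.length_append, List.length_cons]
    omega

lemma flatten_ne_nil (LL : List (List A)) (hLL : LL ≠ []) (hne : ∀ l ∈ LL, l ≠ []) :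
    LL.flatten ≠ [] := by
  intro h
  have := length_le_flatten_length LL hne
  rw [h] at this
  simp at this
  exact hLL this

lemma getD_zero_append (L M : List A) (hL : L ≠ []) :
    (L ++ M).getD 0 a₀ = L.getD 0 a₀ :=
  List.getD_append _ _ _ _ (List.length_pos_iff.2 hL)

lemma getD_last_append (L M : List A) (hM : M ≠ []) :
    (L ++ M).getD ((L ++ M).length - 1) a₀ = M.getD (M.length - 1) a₀ := by
  have h2 : 1 ≤ M.length := List.length_pos_iff.2 hM
  rw [List.getD_append_right _ _ _ _ (by simp; omega)]
  congr 1
  simp only [List.length_append]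
  omega

lemma linCount_flatten_ge (LL : List (List A)) (hne : ∀ l ∈ LL, l ≠ [])
    (hch : ∀ l ∈ LL, l.Chain' P) :
    LL.flatten.length - LL.length ≤ linCount P a₀ LL.flatten := by
  induction LL with
  | nil => simp
  | cons L rest ih =>
    have hL : L ≠ [] := hne L (by simp)
    have h1 : 1 ≤ L.length := List.length_pos_iff.2 hL
    by_cases hr : rest = []
    · subst hr
      simp only [List.flatten_cons, List.flatten_nil, List.append_nil, List.length_cons,
        List.length_nil]
      have := linCount_chain P a₀ L (hch L (by simp))
      omega
    · have hne' : ∀ l ∈ rest, l ≠ [] := fun l hl => hne l (by simp [hl])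
      have hfr : rest.flatten ≠ [] := flatten_ne_nil rest hr hne'
      have ihr := ih hne' (fun l hl => hch l (by simp [hl]))
      have hlen := length_le_flatten_length rest hne'
      simp only [List.flatten_cons]
      rw [linCount_append P a₀ _ _ hL hfr]
      rw [linCount_chain P a₀ L (hch L (by simp))]
      simp only [List.length_append, List.length_cons]
      omega

lemma linCount_flatten_le (LL : List (List A)) (hne : ∀ l ∈ LL, l ≠ [])
    (hbad : ∀ m, (m + 1 < LL.length) →
      ¬ P ((LL.getD m []).getD ((LL.getD m []).length - 1) a₀) ((LL.getD (m+1) []).getD 0 a₀)) :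
    linCount P a₀ LL.flatten ≤ LL.flatten.length - LL.length := by
  induction LL with
  | nil => simp [linCount]
  | cons L rest ih =>
    have hL : L ≠ [] := hne L (by simp)
    have h1 : 1 ≤ L.length := List.length_pos_iff.2 hL
    by_cases hr : rest = []
    · subst hr
      simp only [List.flatten_cons, List.flatten_nil, List.append_nil, List.length_cons,
        List.length_nil]
      have := linCount_le P a₀ L
      omega
    · have hne' : ∀ l ∈ rest, l ≠ [] := fun l hl => hne l (by simp [hl])
      have hfr : rest.flatten ≠ [] := flatten_ne_nil rest hr hne'
      have hlen := length_le_flatten_length rest hne'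
      have ihr := ih hne' (fun m hm => hbad (m+1) (by simpa using Nat.succ_lt_succ hm))
      -- boundary is bad
      have hbd := hbad 0 (by simp [List.length_pos_iff.2 hr])
      simp only [List.getD_cons_zero, List.getD_cons_succ] at hbd
      have hr0 : rest.flatten.getD 0 a₀ = (rest.getD 0 []).getD 0 a₀ := by
        obtain ⟨L', rest', rfl⟩ := List.exists_cons_of_ne_nil hr
        simp only [List.flatten_cons, List.getD_cons_zero]
        exact getD_zero_append a₀ _ _ (hne' L' (by simp))
      simp only [List.flatten_cons]
      rw [linCount_append P a₀ _ _ hL hfr, hr0]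
      rw [pind_neg P hbd]
      have := linCount_le P a₀ L
      simp only [List.length_append, List.length_cons]
      omega

end Counting


section Flat
variable {A : Type*} (a₀ : A)

lemma getD_flatten_zero (LL : List (List A)) (hLL : LL ≠ []) (hne : ∀ l ∈ LL, l ≠ []) :
    LL.flatten.getD 0 a₀ = (LL.getD 0 []).getD 0 a₀ := by
  obtain ⟨L, rest, rfl⟩ := List.exists_cons_of_ne_nil hLL
  simp only [List.flatten_cons, List.getD_cons_zero]
  exact List.getD_append _ _ _ _ (List.length_pos_iff.2 (hne L (by simp)))

lemma getD_flatten_last (LL : List (List A)) (hLL : LL ≠ []) (hne : ∀ l ∈ LL, l ≠ []) :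
    LL.flatten.getD (LL.flatten.length - 1) a₀
      = (LL.getD (LL.length - 1) []).getD ((LL.getD (LL.length - 1) []).length - 1) a₀ := by
  induction LL with
  | nil => simp at hLL
  | cons L rest ih =>
    by_cases hr : rest = []
    · subst hr
      simp
    · have hne' : ∀ l ∈ rest, l ≠ [] := fun l hl => hne l (by simp [hl])
      have hfr : rest.flatten ≠ [] := by
        intro h
        obtain ⟨L', rest', rfl⟩ := List.exists_cons_of_ne_nil hr
        have : L' ≠ [] := hne' L' (by simp)
        simp only [List.flatten_cons] at h
        exact this (List.append_eq_nil_iff.1 h).1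
      have h2 : 1 ≤ rest.length := List.length_pos_iff.2 hr
      simp only [List.flatten_cons, List.length_cons]
      have e1 : (L ++ rest.flatten).getD ((L ++ rest.flatten).length - 1) a₀
          = rest.flatten.getD (rest.flatten.length - 1) a₀ := by
        rw [List.getD_append_right _ _ _ _ (by
          simp only [List.length_append]
          have := List.length_pos_iff.2 hfr
          omega)]
        congr 1
        simp only [List.length_append]
        have := List.length_pos_iff.2 hfr
        omega
      rw [show (L ++ rest.flatten).length = (L ++ rest.flatten).length from rfl] at e1
      rw [e1, ih hr hne']
      have : rest.length - 1 + 1 = rest.length := by omega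
      rw [show rest.length + 1 - 1 = (rest.length - 1) + 1 by omega, List.getD_cons_succ]

lemma getD_decomp (L : List A) (t : ℕ) (ht : t + 1 < L.length) :
    ∃ l1 l2, L = l1 ++ L.getD t a₀ :: L.getD (t+1) a₀ :: l2 := by
  refine ⟨L.take t, L.drop (t+2), ?_⟩
  rw [List.getD_eq_getElem _ _ (by omega), List.getD_eq_getElem _ _ ht]
  conv_lhs => rw [← List.take_append_drop t L]
  congr 1
  rw [List.drop_eq_getElem_cons (by omega : t < L.length)]
  congr 1
  rw [List.drop_eq_getElem_cons ht]

/-- dichotomy for consecutive flatten positions -/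
lemma flatten_dichotomy (LL : List (List A)) (hne : ∀ l ∈ LL, l ≠ [])
    (t : ℕ) (ht : t + 1 < LL.flatten.length) :
    (∃ Q ∈ LL, ∃ l1 l2, Q = l1 ++ LL.flatten.getD t a₀ :: LL.flatten.getD (t+1) a₀ :: l2) ∨
    (∃ m, m + 1 < LL.length ∧
      LL.flatten.getD t a₀ = (LL.getD m []).getD ((LL.getD m []).length - 1) a₀ ∧
      LL.flatten.getD (t+1) a₀ = (LL.getD (m+1) []).getD 0 a₀) := by
  induction LL generalizing t with
  | nil => simp at ht
  | cons L rest ih =>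
    have hL : L ≠ [] := hne L (by simp)
    have hne' : ∀ l ∈ rest, l ≠ [] := fun l hl => hne l (by simp [hl])
    simp only [List.flatten_cons] at ht ⊢
    rcases lt_trichotomy (t+1) L.length with h | h | h
    · left
      refine ⟨L, by simp, ?_⟩
      rw [List.getD_append _ _ _ _ (by omega), List.getD_append _ _ _ _ h]
      exact getD_decomp a₀ L t h
    · -- boundary between L and rest
      have hr : rest ≠ [] := by
        intro hrr
        subst hrr
        simp only [List.flatten_nil, List.append_nil] at ht
        omega
      right
      refine ⟨0, by simp [List.length_pos_iff.2 hr], ?_, ?_⟩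
      · rw [List.getD_append _ _ _ _ (by omega), List.getD_cons_zero]
        congr 1
        omega
      · rw [List.getD_append_right _ _ _ _ (by omega)]
        rw [show t + 1 - L.length = 0 by omega]
        rw [getD_flatten_zero a₀ rest hr hne']
        simp
    · -- inside rest
      have hLl : 1 ≤ L.length := List.length_pos_iff.2 hL
      have ht' : (t - L.length) + 1 < rest.flatten.length := by
        simp only [List.length_append] at ht
        omega
      have e1 : (L ++ rest.flatten).getD t a₀ = rest.flatten.getD (t - L.length) a₀ :=
        List.getD_append_right _ _ _ _ (by omega)
      have e2 : (L ++ rest.flatten).getD (t+1) a₀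
          = rest.flatten.getD ((t - L.length) + 1) a₀ := by
        rw [List.getD_append_right _ _ _ _ (by omega)]
        congr 1
        omega
      rw [e1, e2]
      rcases ih hne' (t - L.length) ht' with ⟨Q, hQ, h⟩ | ⟨m, hm, h1, h2⟩
      · exact Or.inl ⟨Q, by simp [hQ], h⟩
      · exact Or.inr ⟨m + 1, by simpa using Nat.succ_lt_succ hm, by simpa using h1,
          by simpa using h2⟩

end Flat

section PP
variable {A : Type*} {P : A → A → Prop}

/-- the descent / insertion lemma -/
lemma descent (hcond : ∀ w s t : A, s ≠ t → P s w → P t w → P s t ∨ P t s)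
    (a₀ : A) :
    ∀ (L : List A) (z x : A), L.Chain' P → z ∉ L → x ∈ L → P z x →
      ¬ P z (L.getD 0 a₀) →
      ∃ L1 u L2, L = L1 ++ u :: L2 ∧ L2 ≠ [] ∧ (L1 ++ u :: z :: L2).Chain' P := by
  intro L
  induction L with
  | nil => intro z x _ _ hx; simp at hx
  | cons c L' ih =>
    intro z x hch hz hx hzx hhead
    simp only [List.getD_cons_zero] at hhead
    rcases List.mem_cons.1 hx with rfl | hx'
    · exact absurd hzx hhead
    cases L' with
    | nil => simp at hx'
    | cons c' L'' =>
      by_cases hzc' : P z c'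
      · have hcc' : P c c' := (List.isChain_cons_cons.1 hch).1
        have hcz : c ≠ z := by
          intro h
          exact hz (h ▸ (List.mem_cons_self (a := c) (l := c' :: L'')))
        rcases hcond c' c z hcz hcc' hzc' with h | h
        · refine ⟨[], c, c' :: L'', rfl, by simp, ?_⟩
          simp only [List.nil_append]
          exact List.isChain_cons_cons.2 ⟨h, List.isChain_cons_cons.2 ⟨hzc', (List.isChain_cons_cons.1 hch).2⟩⟩
        · exact absurd h hhead
      · have hz' : z ∉ c' :: L'' := fun h => hz (List.mem_cons_of_mem _ h)
        obtain ⟨L1, u, L2, hdec, hL2, hch'⟩ :=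
          ih z x (List.isChain_cons_cons.1 hch).2 hz' hx' hzx
            (by simpa using hzc')
        refine ⟨c :: L1, u, L2, by rw [List.cons_append, hdec], hL2, ?_⟩
        rw [List.cons_append]; apply List.isChain_cons.2
        refine ⟨?_, hch'⟩
        intro y hy
        have hh : (L1 ++ u :: z :: L2).head? = (c' :: L'').head? := by
          rw [hdec, List.head?_append, List.head?_append]
          simp
        rw [hh] at hy
        simp only [List.head?_cons, Option.mem_def, Option.some_inj] at hy
        subst hy
        exact (List.isChain_cons_cons.1 hch).1

variable [DecidableEq A]

local instance : BEq (List A) := instBEqOfDecidableEq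

lemma paths_disjoint (pp : PathPartition A P) {i j : ℕ} (hi : i < pp.paths.length)
    (hj : j < pp.paths.length) (hij : i ≠ j) :
    (pp.paths.getD i []).Disjoint (pp.paths.getD j []) := by
  have hpair : List.Pairwise List.Disjoint pp.paths := (List.nodup_flatten.1 pp.nodup).2
  rw [List.pairwise_iff_get] at hpair
  rw [List.getD_eq_getElem _ _ hi, List.getD_eq_getElem _ _ hj]
  rcases Nat.lt_or_ge i j with h | h
  · exact hpair ⟨i, hi⟩ ⟨j, hj⟩ h
  · have : j < i := by omega
    exact List.disjoint_comm.1 (hpair ⟨j, hj⟩ ⟨i, hi⟩ this)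

lemma path_index_unique (pp : PathPartition A P) {i j : ℕ} (hi : i < pp.paths.length)
    (hj : j < pp.paths.length) {x : A} (hxi : x ∈ pp.paths.getD i [])
    (hxj : x ∈ pp.paths.getD j []) : i = j := by
  by_contra h
  exact paths_disjoint pp hi hj h hxi hxj

/-- build a path partition from a permuted set of paths -/
def rebuild (pp : PathPartition A P) (LL' : List (List A))
    (hne : ∀ l ∈ LL', l ≠ []) (hch : ∀ l ∈ LL', l.Chain' P)
    (hperm : LL'.flatten.Perm pp.paths.flatten) : PathPartition A P :=
  ⟨LL', hne, hch, hperm.nodup_iff.2 pp.nodup, fun a => hperm.mem_iff.2 (pp.complete a)⟩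

lemma minimalize : ∀ (k : ℕ) (pp : PathPartition A P), pp.paths.length ≤ k →
    ∃ pp' : PathPartition A P, pp'.Minimal ∧ pp'.paths.length ≤ pp.paths.length := by
  intro k
  induction k with
  | zero =>
    intro pp hlen
    refine ⟨pp, ?_, le_rfl⟩
    intro i j hij
    have := i.isLt
    omega
  | succ k ih =>
    intro pp hlen
    by_cases hm : pp.Minimal
    · exact ⟨pp, hm, le_rfl⟩
    · rw [PathPartition.Minimal] at hm
      push_neg at hm
      obtain ⟨i, j, hij, x, hx, y, hy, hPxy⟩ := hm
      set l1 := pp.paths.get i with hl1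
      set l2 := pp.paths.get j with hl2
      have hl1m : l1 ∈ pp.paths := List.get_mem _ _
      have hl2m : l2 ∈ pp.paths := List.get_mem _ _
      have hl12 : l2 ≠ l1 := by
        intro h
        have hd := paths_disjoint pp i.isLt j.isLt (fun hh => hij (Fin.ext hh))
        rw [List.getD_eq_getElem _ _ i.isLt, List.getD_eq_getElem _ _ j.isLt] at hd
        have hx' : x ∈ l1 := List.mem_of_mem_getLast? hx
        have hy' : y ∈ l2 := List.mem_of_mem_head? hy
        exact hd (show x ∈ pp.paths[(i:ℕ)] from hx')
          (by rw [← h] at hx'; exact (show x ∈ pp.paths[(j:ℕ)] from hx'))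
      have hl2e : l2 ∈ pp.paths.erase l1 := by
        rw [List.mem_erase_of_ne hl12]; exact hl2m
      have hperm1 : pp.paths.Perm (l1 :: pp.paths.erase l1) := List.perm_cons_erase hl1m
      have hperm2 : (pp.paths.erase l1).Perm (l2 :: (pp.paths.erase l1).erase l2) :=
        List.perm_cons_erase hl2e
      set rest := (pp.paths.erase l1).erase l2 with hrest
      have hperm : pp.paths.Perm (l1 :: l2 :: rest) :=
        hperm1.trans (List.Perm.cons l1 hperm2)
      have hflat : ((l1 ++ l2) :: rest).flatten.Perm pp.paths.flatten := by
        have : ((l1 ++ l2) :: rest).flatten = (l1 :: l2 :: rest).flatten := by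
          simp [List.flatten_cons, List.append_assoc]
        rw [this]
        exact (hperm.flatten).symm
      have hrmem : ∀ l ∈ rest, l ∈ pp.paths := fun l hl =>
        List.mem_of_mem_erase (List.mem_of_mem_erase hl)
      have hne : ∀ l ∈ (l1 ++ l2) :: rest, l ≠ [] := by
        intro l hl
        rcases List.mem_cons.1 hl with rfl | hl'
        · have := pp.nonempty l1 hl1m
          simp [this]
        · exact pp.nonempty l (hrmem l hl')
      have hch : ∀ l ∈ (l1 ++ l2) :: rest, l.Chain' P := by
        intro l hl
        rcases List.mem_cons.1 hl with rfl | hl'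
        · apply List.isChain_append.2
          refine ⟨pp.chains l1 hl1m, pp.chains l2 hl2m, ?_⟩
          intro x' hx' y' hy'
          rw [Option.mem_def] at hx hx' hy hy'
          rw [hx] at hx'
          rw [hy] at hy'
          obtain rfl : x = x' := Option.some.inj hx'
          obtain rfl : y = y' := Option.some.inj hy'
          exact hPxy
        · exact pp.chains l (hrmem l hl')
      have h2le : 2 ≤ pp.paths.length := by
        have h1 := i.isLt
        have h2 := j.isLt
        have h3 : (i : ℕ) ≠ (j : ℕ) := fun h => hij (Fin.ext h)
        omega
      have hrl : rest.length = pp.paths.length - 2 := by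
        rw [hrest, List.length_erase_of_mem hl2e, List.length_erase_of_mem hl1m]
        omega
      obtain ⟨pp', hmin', hle'⟩ := ih (rebuild pp ((l1 ++ l2) :: rest) hne hch hflat)
        (by simp only [rebuild, List.length_cons]; omega)
      refine ⟨pp', hmin', ?_⟩
      simp only [rebuild, List.length_cons] at hle'
      omega

end PP

section Phi
variable {A : Type*} {P : A → A → Prop} [Fintype A] [DecidableEq A]

lemma pind_eq_one_iff {x y : A} : pind P x y = 1 ↔ P x y := by
  by_cases h : P x y <;> simp [pind, h]

lemma pind_eq_zero_iff {x y : A} : pind P x y = 0 ↔ ¬ P x y := by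
  by_cases h : P x y <;> simp [pind, h]

lemma flatten_length (pp : PathPartition A P) :
    pp.paths.flatten.length = Fintype.card A := by
  rw [← List.toFinset_card_of_nodup pp.nodup]
  have h : pp.paths.flatten.toFinset = Finset.univ :=
    Finset.eq_univ_iff_forall.2 (fun x => List.mem_toFinset.2 (pp.complete x))
  rw [h, Finset.card_univ]

lemma exists_phi {n : ℕ} (hn : 0 < n) (hcard : Fintype.card A = n)
    (pp : PathPartition A P) : ∃ ρ : A ≃ ZMod n, IsPhi n pp ρ := by
  haveI : NeZero n := ⟨by omega⟩
  have flen : pp.paths.flatten.length = n := (flatten_length pp).trans hcard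
  set e1 := List.Nodup.getEquivOfForallMemList _ pp.nodup pp.complete with he1
  have hg : Function.Bijective (fun k : Fin n => ((k : ℕ) : ZMod n)) := by
    constructor
    · intro k1 k2 h
      have h2 := congrArg ZMod.val h
      simp only [ZMod.val_cast_of_lt k1.isLt, ZMod.val_cast_of_lt k2.isLt] at h2
      exact Fin.ext h2
    · intro u
      exact ⟨⟨u.val, ZMod.val_lt u⟩, ZMod.natCast_rightInverse u⟩
  refine ⟨e1.symm.trans ((finCongr flen).trans (Equiv.ofBijective _ hg)), ?_⟩
  intro k
  simp only [Equiv.trans_apply]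
  have h3 : e1.symm (pp.paths.flatten.get k) = k := by
    rw [Equiv.symm_apply_eq]
    exact (List.Nodup.getEquivOfForallMemList_apply _ _ _ k).symm
  rw [h3]
  rfl

lemma alpha_count {n : ℕ} (hn3 : 3 ≤ n) (hcard : Fintype.card A = n) (a₀ : A)
    (pp : PathPartition A P) (π : A ≃ ZMod n) (hπ : IsPhi n pp π) :
    {j : ZMod n | P (π.symm j) (π.symm (j + 1))}.ncard
      = cycCount P a₀ pp.paths.flatten := by
  classical
  haveI : NeZero n := ⟨by omega⟩
  haveI : Fact (1 < n) := ⟨by omega⟩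
  have flen : pp.paths.flatten.length = n := (flatten_length pp).trans hcard
  have hsymm : ∀ t : ℕ, t < n → π.symm ((t : ZMod n)) = pp.paths.flatten.getD t a₀ := by
    intro t ht
    have h1 : t < pp.paths.flatten.length := by omega
    have h2 := hπ ⟨t, h1⟩
    rw [List.getD_eq_getElem _ _ h1]
    rw [← h2]
    simp
  rw [Set.ncard_eq_toFinset_card', Set.toFinset_setOf, Finset.card_filter]
  simp only [cycCount, flen]
  refine Finset.sum_nbij' (fun u => ZMod.val u) (fun t => ((t : ℕ) : ZMod n))
    ?_ ?_ ?_ ?_ ?_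
  · intro u _
    simp [Finset.mem_range, ZMod.val_lt]
  · intro t _
    simp
  · intro u _
    exact ZMod.natCast_rightInverse u
  · intro t ht
    simp only [Finset.mem_range] at ht
    exact ZMod.val_cast_of_lt ht
  · intro u _
    have h1 : π.symm u = pp.paths.flatten.getD u.val a₀ := by
      have h := hsymm u.val (ZMod.val_lt u)
      rwa [ZMod.natCast_rightInverse u] at h
    have h2 : π.symm (u + 1) = pp.paths.flatten.getD ((u.val + 1) % n) a₀ := by
      have hv : (u + 1).val = (u.val + 1) % n := by
        rw [ZMod.val_add, ZMod.val_one]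
      have h := hsymm (u+1).val (ZMod.val_lt _)
      rwa [ZMod.natCast_rightInverse (u+1), hv] at h
    rw [h1, h2]
    by_cases h : P (pp.paths.flatten.getD u.val a₀)
        (pp.paths.flatten.getD ((u.val + 1) % n) a₀) <;> simp [pind, h]

variable {n : ℕ}

lemma zmod_one_ne_zero (hn3 : 3 ≤ n) : (1 : ZMod n) ≠ 0 := by
  haveI : NeZero n := ⟨by omega⟩
  haveI : Fact (1 < n) := ⟨by omega⟩
  intro h
  have := congrArg ZMod.val h
  rw [ZMod.val_one, ZMod.val_zero] at this
  exact one_ne_zero this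

lemma zmod_two_ne_zero (hn3 : 3 ≤ n) : (2 : ZMod n) ≠ 0 := by
  haveI : NeZero n := ⟨by omega⟩
  intro h
  have h2 : ((2 : ℕ) : ZMod n) = 0 := by
    push_cast
    exact h
  have := congrArg ZMod.val h2
  rw [ZMod.val_cast_of_lt (by omega), ZMod.val_zero] at this
  omega

lemma utility_cycle (hn3 : 3 ≤ n) (π : A ≃ ZMod n) (i : A) :
    utility (cycleSeatGraph n) P π i
      = pind P i (π.symm (π i - 1)) + pind P i (π.symm (π i + 1)) := by
  haveI : NeZero n := ⟨by omega⟩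
  set u := π i with hu
  have h1 : (1 : ZMod n) ≠ 0 := zmod_one_ne_zero hn3
  have h2 : (2 : ZMod n) ≠ 0 := zmod_two_ne_zero hn3
  have hne1 : u ≠ u + 1 := by
    intro h
    exact h1 (by linear_combination -h)
  have hne2 : u ≠ u - 1 := by
    intro h
    exact h1 (by linear_combination h)
  have hne3 : u - 1 ≠ u + 1 := by
    intro h
    exact h2 (by linear_combination -h)
  have hset : {v : ZMod n | (cycleSeatGraph n).Adj (π i) v ∧ P i (π.symm v)}
      = {v : ZMod n | (v = u - 1 ∧ P i (π.symm (u - 1))) ∨ (v = u + 1 ∧ P i (π.symm (u + 1)))} := by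
    ext v
    simp only [Set.mem_setOf_eq, cycleSeatGraph, SimpleGraph.fromRel_adj, ← hu]
    constructor
    · rintro ⟨⟨hne, h | h⟩, hp⟩
      · exact Or.inr ⟨h, h ▸ hp⟩
      · have hv : v = u - 1 := by linear_combination -h
        exact Or.inl ⟨hv, hv ▸ hp⟩
    · rintro (⟨rfl, hp⟩ | ⟨rfl, hp⟩)
      · exact ⟨⟨hne2, Or.inr (by ring)⟩, hp⟩
      · exact ⟨⟨hne1, Or.inl rfl⟩, hp⟩
  rw [utility, hset]
  by_cases hp1 : P i (π.symm (u - 1)) <;> by_cases hp2 : P i (π.symm (u + 1))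
  · have : {v : ZMod n | (v = u - 1 ∧ P i (π.symm (u - 1))) ∨ (v = u + 1 ∧ P i (π.symm (u + 1)))}
        = {u - 1, u + 1} := by
      ext v
      simp [hp1, hp2]
    rw [this, Set.ncard_pair hne3, pind_pos P hp1, pind_pos P hp2]
  · have : {v : ZMod n | (v = u - 1 ∧ P i (π.symm (u - 1))) ∨ (v = u + 1 ∧ P i (π.symm (u + 1)))}
        = {u - 1} := by
      ext v
      simp [hp1, hp2]
    rw [this, Set.ncard_singleton, pind_pos P hp1, pind_neg P hp2]
  · have : {v : ZMod n | (v = u - 1 ∧ P i (π.symm (u - 1))) ∨ (v = u + 1 ∧ P i (π.symm (u + 1)))}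
        = {u + 1} := by
      ext v
      simp [hp1, hp2]
    rw [this, Set.ncard_singleton, pind_neg P hp1, pind_pos P hp2]
  · have : {v : ZMod n | (v = u - 1 ∧ P i (π.symm (u - 1))) ∨ (v = u + 1 ∧ P i (π.symm (u + 1)))}
        = ∅ := by
      ext v
      simp [hp1, hp2]
    rw [this, Set.ncard_empty, pind_neg P hp1, pind_neg P hp2]

lemma blocking_facts (hn3 : 3 ≤ n) (π : A ≃ ZMod n) {i j : A}
    (hb : blockingPair (cycleSeatGraph n) P π i j) (hadj : π j = π i + 1) :
    P i (π.symm (π i + 2)) ∧ ¬ P i (π.symm (π i - 1)) ∧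
      P j (π.symm (π i - 1)) ∧ ¬ P j (π.symm (π i + 2)) := by
  haveI : NeZero n := ⟨by omega⟩
  obtain ⟨he1, he2⟩ := hb
  have h1 : (1 : ZMod n) ≠ 0 := zmod_one_ne_zero hn3
  have h2 : (2 : ZMod n) ≠ 0 := zmod_two_ne_zero hn3
  set u := π i with hu
  set a := π.symm (u - 1) with ha
  set b := π.symm (u + 2) with hbb
  have hbi : b ≠ i := by
    intro h
    apply h2
    have := congrArg π h
    rw [hbb, Equiv.apply_symm_apply, ← hu] at this
    linear_combination this
  have hbj : b ≠ j := by
    intro h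
    apply h1
    have := congrArg π h
    rw [hbb, Equiv.apply_symm_apply, hadj] at this
    linear_combination this
  have hai : a ≠ i := by
    intro h
    apply h1
    have := congrArg π h
    rw [ha, Equiv.apply_symm_apply, ← hu] at this
    linear_combination -this
  have haj : a ≠ j := by
    intro h
    apply h2
    have := congrArg π h
    rw [ha, Equiv.apply_symm_apply, hadj] at this
    linear_combination -this
  have hsymm1 : π.symm (u + 1) = j := by
    rw [hadj.symm, Equiv.symm_apply_apply]
  have hsymmu : π.symm u = i := by
    rw [hu, Equiv.symm_apply_apply]
  -- envies i j
  rw [envies, utility_cycle hn3, utility_cycle hn3] at he1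
  have hsw : ((Equiv.swap i j).trans π) i = π j := by simp
  rw [hsw, hadj] at he1
  have hswsymm : ∀ v : ZMod n, ((Equiv.swap i j).trans π).symm v = Equiv.swap i j (π.symm v) := by
    intro v
    simp [Equiv.symm_apply_eq]
  rw [hswsymm, hswsymm] at he1
  have e1 : u + 1 - 1 = u := by ring
  have e2 : u + 1 + 1 = u + 2 := by ring
  rw [e1, e2] at he1
  rw [hsymmu, Equiv.swap_apply_left, ← hbb,
    Equiv.swap_apply_of_ne_of_ne hbi hbj, ← ha, hsymm1] at he1
  -- envies j i
  rw [envies, utility_cycle hn3, utility_cycle hn3] at he2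
  have hsw2 : ((Equiv.swap j i).trans π) j = π i := by simp
  rw [hsw2, ← hu] at he2
  have hswsymm2 : ∀ v : ZMod n, ((Equiv.swap j i).trans π).symm v = Equiv.swap j i (π.symm v) := by
    intro v
    simp [Equiv.symm_apply_eq]
  rw [hswsymm2, hswsymm2] at he2
  rw [hadj, e1, e2, ← ha, ← hbb, hsymm1, Equiv.swap_apply_left,
    Equiv.swap_apply_of_ne_of_ne haj hai, hsymmu] at he2
  -- now he1 : pind P i a + pind P i j < pind P i j + pind P i b
  -- he2 : pind P j i + pind P j b < pind P j a + pind P j i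
  have p1 := pind_le_one P i a
  have p2 := pind_le_one P i b
  have p3 := pind_le_one P j a
  have p4 := pind_le_one P j b
  refine ⟨?_, ?_, ?_, ?_⟩
  · rw [← pind_eq_one_iff (P := P)]
    omega
  · rw [← pind_eq_zero_iff (P := P)]
    omega
  · rw [← pind_eq_one_iff (P := P)]
    omega
  · rw [← pind_eq_zero_iff (P := P)]
    omega

end Phi

section Main
variable {A : Type*} {P : A → A → Prop} [Fintype A] [DecidableEq A]

lemma head?_eq_getD {α : Type*} (d : α) (l : List α) (h : l ≠ []) :
    l.head? = some (l.getD 0 d) := by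
  cases l with
  | nil => simp at h
  | cons c l' => simp

lemma getLast?_eq_getD {α : Type*} (d : α) (l : List α) (h : l ≠ []) :
    l.getLast? = some (l.getD (l.length - 1) d) := by
  rw [List.getLast?_eq_getLast h, List.getLast_eq_getElem,
    List.getD_eq_getElem _ _ (by have := List.length_pos_iff.2 h; omega)]

lemma getD_mem {α : Type*} (d : α) (l : List α) {t : ℕ} (ht : t < l.length) :
    l.getD t d ∈ l := by
  rw [List.getD_eq_getElem _ _ ht]
  exact List.getElem_mem ht

lemma chain_mid {l1 l2 : List A} {x y : A} (hch : (l1 ++ x :: y :: l2).Chain' P) :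
    P x y :=
  (List.isChain_cons_cons.1 (List.isChain_append.1 hch).2.1).1

lemma minimal_getD {pp : PathPartition A P} (hmin : pp.Minimal) (a₀ : A) {mi mj : ℕ}
    (hi : mi < pp.paths.length) (hj : mj < pp.paths.length) (hij : mi ≠ mj) :
    ¬ P ((pp.paths.getD mi []).getD ((pp.paths.getD mi []).length - 1) a₀)
        ((pp.paths.getD mj []).getD 0 a₀) := by
  have h := hmin ⟨mi, hi⟩ ⟨mj, hj⟩ (by simp [Fin.ext_iff, hij])
  have e1 : pp.paths.get ⟨mi, hi⟩ = pp.paths.getD mi [] := by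
    rw [List.getD_eq_getElem _ _ hi, List.get_eq_getElem]
  have e2 : pp.paths.get ⟨mj, hj⟩ = pp.paths.getD mj [] := by
    rw [List.getD_eq_getElem _ _ hj, List.get_eq_getElem]
  rw [e1, e2] at h
  have hne1 : pp.paths.getD mi [] ≠ [] :=
    pp.nonempty _ (getD_mem _ _ hi)
  have hne2 : pp.paths.getD mj [] ≠ [] :=
    pp.nonempty _ (getD_mem _ _ hj)
  exact h _ (by rw [getLast?_eq_getD a₀ _ hne1]; rfl) _ (by rw [head?_eq_getD a₀ _ hne2]; rfl)

variable {n : ℕ}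

lemma phi_symm_getD (hn : 0 < n) (hcard : Fintype.card A = n) (a₀ : A)
    (pp : PathPartition A P) (π : A ≃ ZMod n) (hπ : IsPhi n pp π) (u : ZMod n) :
    π.symm u = pp.paths.flatten.getD u.val a₀ := by
  haveI : NeZero n := ⟨by omega⟩
  have flen : pp.paths.flatten.length = n := (flatten_length pp).trans hcard
  have h1 : u.val < pp.paths.flatten.length := by rw [flen]; exact ZMod.val_lt u
  have h2 := hπ ⟨u.val, h1⟩
  rw [show ((⟨u.val, h1⟩ : Fin _) : ℕ) = u.val from rfl, ZMod.natCast_rightInverse u] at h2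
  have h3 : π.symm u = pp.paths.flatten.get ⟨u.val, h1⟩ := by
    rw [Equiv.symm_apply_eq]
    exact h2.symm
  rw [h3, List.getD_eq_getElem _ _ h1]
  rfl

lemma phi_dichotomy (hn3 : 3 ≤ n) (hcard : Fintype.card A = n) (a₀ : A)
    (pp : PathPartition A P) (π : A ≃ ZMod n) (hπ : IsPhi n pp π) (u : ZMod n) :
    (∃ Q ∈ pp.paths, ∃ l1 l2, Q = l1 ++ π.symm u :: π.symm (u+1) :: l2) ∨
    (∃ m : ℕ, m < pp.paths.length ∧
      π.symm u = (pp.paths.getD m []).getD ((pp.paths.getD m []).length - 1) a₀ ∧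
      π.symm (u+1) = (pp.paths.getD ((m+1) % pp.paths.length) []).getD 0 a₀) := by
  haveI : NeZero n := ⟨by omega⟩
  haveI : Fact (1 < n) := ⟨by omega⟩
  have flen : pp.paths.flatten.length = n := (flatten_length pp).trans hcard
  have hfne : pp.paths.flatten ≠ [] := by
    intro h
    rw [h] at flen
    simp at flen
    omega
  have hLLne : pp.paths ≠ [] := by
    intro h
    exact hfne (by rw [h]; rfl)
  have hk1 : 1 ≤ pp.paths.length := List.length_pos_iff.2 hLLne
  have h1 : π.symm u = pp.paths.flatten.getD u.val a₀ :=
    phi_symm_getD (by omega) hcard a₀ pp π hπ u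
  have hval : (u + 1).val = (u.val + 1) % n := by
    rw [ZMod.val_add, ZMod.val_one]
  have h2 : π.symm (u + 1) = pp.paths.flatten.getD ((u.val + 1) % n) a₀ := by
    rw [phi_symm_getD (by omega) hcard a₀ pp π hπ (u+1), hval]
  have huval : u.val < n := ZMod.val_lt u
  rcases Nat.lt_or_ge (u.val + 1) n with hlt | hge
  · -- non-wrap
    rw [Nat.mod_eq_of_lt hlt] at h2
    rcases flatten_dichotomy a₀ pp.paths pp.nonempty u.val (by omega) with
      ⟨Q, hQ, l1, l2, hdec⟩ | ⟨m, hm, e1, e2⟩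
    · left
      exact ⟨Q, hQ, l1, l2, by rw [h1, h2]; exact hdec⟩
    · right
      refine ⟨m, by omega, by rw [h1, e1], ?_⟩
      rw [h2, e2, Nat.mod_eq_of_lt hm]
  · -- wrap: u.val = n - 1
    have huv : u.val = n - 1 := by omega
    have hmod : (u.val + 1) % n = 0 := by
      rw [show u.val + 1 = n by omega, Nat.mod_self]
    rw [hmod] at h2
    right
    refine ⟨pp.paths.length - 1, by omega, ?_, ?_⟩
    · rw [h1, huv, ← flen]
      exact getD_flatten_last a₀ pp.paths hLLne pp.nonempty
    · rw [h2, show (pp.paths.length - 1 + 1) % pp.paths.length = 0 by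
        rw [Nat.sub_add_cancel hk1, Nat.mod_self]]
      exact getD_flatten_zero a₀ pp.paths hLLne pp.nonempty

lemma new_count_ge (a₀ : A) (pp' : PathPartition A P) :
    pp'.paths.flatten.length - pp'.paths.length ≤ cycCount P a₀ pp'.paths.flatten := by
  by_cases h : pp'.paths.flatten = []
  · rw [h]
    simp
  · rw [cycCount_eq P a₀ _ h]
    have := linCount_flatten_ge P a₀ pp'.paths pp'.nonempty pp'.chains
    omega

lemma old_count_le (a₀ : A) (pp : PathPartition A P) (hmin : pp.Minimal)
    (hk2 : 2 ≤ pp.paths.length) (hfne : pp.paths.flatten ≠ []) :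
    cycCount P a₀ pp.paths.flatten + pp.paths.length ≤ pp.paths.flatten.length := by
  have hlin := linCount_flatten_le P a₀ pp.paths pp.nonempty
    (fun m hm => minimal_getD hmin a₀ (by omega) hm (by omega))
  have hLLne : pp.paths ≠ [] := by
    intro h
    exact hfne (by rw [h]; rfl)
  have hwrap : ¬ P (pp.paths.flatten.getD (pp.paths.flatten.length - 1) a₀)
      (pp.paths.flatten.getD 0 a₀) := by
    rw [getD_flatten_last a₀ pp.paths hLLne pp.nonempty,
      getD_flatten_zero a₀ pp.paths hLLne pp.nonempty]
    exact minimal_getD hmin a₀ (by omega) (by omega) (by omega)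
  rw [cycCount_eq P a₀ _ hfne, pind_neg P hwrap]
  have := length_le_flatten_length pp.paths pp.nonempty
  omega

/-- main improvement wrapper for the `k ≥ 2` cases -/
lemma improve (hn3 : 3 ≤ n) (hcard : Fintype.card A = n) (a₀ : A)
    (pp : PathPartition A P) (hmin : pp.Minimal)
    (π : A ≃ ZMod n) (hπ : IsPhi n pp π)
    (LL' : List (List A)) (hne : ∀ l ∈ LL', l ≠ []) (hch : ∀ l ∈ LL', l.Chain' P)
    (hperm : LL'.flatten.Perm pp.paths.flatten)
    (hlen : LL'.length + 1 ≤ pp.paths.length) (hk2 : 2 ≤ pp.paths.length) :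
    ∃ (pp' : PathPartition A P) (ρ : A ≃ ZMod n), pp'.Minimal ∧ IsPhi n pp' ρ ∧
      Set.ncard {j : ZMod n | P (π.symm j) (π.symm (j + 1))} + 1 ≤
        Set.ncard {j : ZMod n | P (ρ.symm j) (ρ.symm (j + 1))} := by
  have flen : pp.paths.flatten.length = n := (flatten_length pp).trans hcard
  have hfne : pp.paths.flatten ≠ [] := by
    intro h
    rw [h] at flen
    simp at flen
    omega
  obtain ⟨pp', hmin', hlen'⟩ := minimalize LL'.length (rebuild pp LL' hne hch hperm) le_rfl
  obtain ⟨ρ, hρ⟩ := exists_phi (by omega) hcard pp'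
  refine ⟨pp', ρ, hmin', hρ, ?_⟩
  rw [alpha_count hn3 hcard a₀ pp π hπ, alpha_count hn3 hcard a₀ pp' ρ hρ]
  have hold := old_count_le a₀ pp hmin hk2 hfne
  have hnew := new_count_ge a₀ pp'
  have flen' : pp'.paths.flatten.length = n := (flatten_length pp').trans hcard
  have hrb : (rebuild pp LL' hne hch hperm).paths.length = LL'.length := rfl
  rw [hrb] at hlen'
  -- pp'.paths.length ≤ LL'.length ≤ pp.paths.length - 1
  omega

end Main

section Surgery
variable {A : Type*} {P : A → A → Prop} [Fintype A] [DecidableEq A]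

local instance inst_s8 : BEq (List A) := instBEqOfDecidableEq

/-- insert a fresh agent `z` approving some member of a chain `L` into `L`,
preserving the last element (and either preserving the head or `z` approves it). -/
lemma insert_into (hcond : ∀ w s t : A, s ≠ t → P s w → P t w → P s t ∨ P t s) (a₀ : A)
    (L : List A) (z x : A) (hch : L.Chain' P) (hz : z ∉ L) (hx : x ∈ L) (hPzx : P z x) :
    ∃ Lnew : List A, Lnew.Perm (z :: L) ∧ Lnew.Chain' P ∧
      Lnew.getD (Lnew.length - 1) a₀ = L.getD (L.length - 1) a₀ ∧
      (Lnew.getD 0 a₀ = L.getD 0 a₀ ∨ P z (L.getD 0 a₀)) := by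
  have hLne : L ≠ [] := List.ne_nil_of_mem hx
  have hL1 : 1 ≤ L.length := List.length_pos_iff.2 hLne
  by_cases hzh : P z (L.getD 0 a₀)
  · refine ⟨z :: L, List.Perm.refl _, ?_, ?_, Or.inr hzh⟩
    · apply List.isChain_cons.2
      refine ⟨?_, hch⟩
      intro y hy
      rw [head?_eq_getD a₀ L hLne] at hy
      simp only [Option.mem_def, Option.some_inj] at hy
      rwa [hy] at hzh
    · rw [show (z :: L).length - 1 = (L.length - 1) + 1 by simp; omega,
        List.getD_cons_succ]
  · obtain ⟨L1, v, L2, hLd, hL2, hch'⟩ := descent hcond a₀ L z x hch hz hx hPzx hzh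
    refine ⟨L1 ++ v :: z :: L2, ?_, hch', ?_, Or.inl ?_⟩
    · have h1 : L1 ++ v :: z :: L2 = (L1 ++ [v]) ++ z :: L2 := by simp
      have h2 : (L1 ++ [v]) ++ L2 = L := by rw [hLd]; simp
      rw [h1]
      have := List.perm_middle (a := z) (l₁ := L1 ++ [v]) (l₂ := L2)
      rw [h2] at this
      exact this
    · have h1 : L1 ++ v :: z :: L2 = (L1 ++ [v, z]) ++ L2 := by simp
      have h2 : L = (L1 ++ [v]) ++ L2 := by rw [hLd]; simp
      rw [h1, getD_last_append a₀ _ _ hL2, h2, getD_last_append a₀ _ _ hL2]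
    · rw [hLd]
      cases L1 with
      | nil => simp
      | cons c L1' => simp

lemma last_forces_nil (a₀ : A) {Q l1 l2 : List A} {i j : A} (hnd : Q.Nodup)
    (hdec : Q = l1 ++ i :: j :: l2) (hlast : Q.getD (Q.length - 1) a₀ = j) :
    l2 = [] := by
  by_contra hne
  have hdec2 : Q = (l1 ++ [i, j]) ++ l2 := by rw [hdec]; simp
  have hjl2 : j ∈ l2 := by
    rw [hdec2, getD_last_append a₀ _ _ hne] at hlast
    rw [← hlast]
    exact getD_mem a₀ l2 (by have := List.length_pos_iff.2 hne; omega)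
  have : (j :: l2).Nodup := by
    rw [hdec] at hnd
    exact (hnd.of_append_right).of_cons
  exact (List.nodup_cons.1 this).1 hjl2

lemma eq_singleton_of_head_eq_last (a₀ : A) {l : List A} (hnd : l.Nodup) (hne : l ≠ [])
    (h : l.getD 0 a₀ = l.getD (l.length - 1) a₀) : l = [l.getD 0 a₀] := by
  have h1 : 1 ≤ l.length := List.length_pos_iff.2 hne
  have hlen : l.length = 1 := by
    by_contra hl
    have h2 : 2 ≤ l.length := by omega
    rw [List.getD_eq_getElem _ _ (by omega), List.getD_eq_getElem _ _ (by omega)] at h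
    have := (hnd.getElem_inj_iff).1 h
    omega
  obtain ⟨c, rfl⟩ := List.length_eq_one_iff.1 hlen
  simp

lemma paths_disjoint_of_ne (pp : PathPartition A P) {X Y : List A}
    (hX : X ∈ pp.paths) (hY : Y ∈ pp.paths) (hXY : X ≠ Y) : X.Disjoint Y := by
  obtain ⟨iX, hiX⟩ := List.mem_iff_get.1 hX
  obtain ⟨iY, hiY⟩ := List.mem_iff_get.1 hY
  have hne : (iX : ℕ) ≠ (iY : ℕ) := by
    intro h
    apply hXY
    rw [← hiX, ← hiY]
    congr 1
    exact Fin.ext h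
  have := paths_disjoint pp iX.isLt iY.isLt hne
  rwa [List.getD_eq_getElem _ _ iX.isLt, List.getD_eq_getElem _ _ iY.isLt,
    ← List.get_eq_getElem, ← List.get_eq_getElem, hiX, hiY] at this

lemma extract_one {LL : List (List A)} {X : List A} (hX : X ∈ LL) :
    ∃ rest : List (List A), LL.Perm (X :: rest) ∧ rest.length + 1 = LL.length ∧
      ∀ l ∈ rest, l ∈ LL := by
  refine ⟨LL.erase X, List.perm_cons_erase hX, ?_, fun l hl => List.mem_of_mem_erase hl⟩
  rw [List.length_erase_of_mem hX]
  have : 1 ≤ LL.length := List.length_pos_iff.2 (List.ne_nil_of_mem hX)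
  omega

lemma extract_two {LL : List (List A)} {X Y : List A} (hX : X ∈ LL) (hY : Y ∈ LL)
    (hXY : Y ≠ X) :
    ∃ rest : List (List A), LL.Perm (X :: Y :: rest) ∧ rest.length + 2 = LL.length ∧
      ∀ l ∈ rest, l ∈ LL := by
  obtain ⟨r1, hp1, hl1, hm1⟩ := extract_one hX
  have hY1 : Y ∈ r1 := by
    have := hp1.mem_iff.1 hY
    simp only [List.mem_cons] at this
    rcases this with h | h
    · exact absurd h hXY
    · exact h
  obtain ⟨r2, hp2, hl2, hm2⟩ := extract_one hY1
  refine ⟨r2, hp1.trans (List.Perm.cons X hp2), by omega, fun l hl => hm1 l (hm2 l hl)⟩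

end Surgery

/-- Lemma 1: Under the Case 2 condition (any two distinct approvers of a
common agent are joined by an arc), if the assignment `Φ` of a minimal path partition has
an adjacent blocking pair on the cycle `C_n`, then some minimal path partition yields an
assignment with strictly more agents approving their successor around the cycle. -/
theorem stmt8 {A : Type*} [Fintype A] [DecidableEq A] {n : ℕ} (hn : 3 ≤ n)
    (hcard : Fintype.card A = n) (P : A → A → Prop) (hP : Irreflexive P)
    (hcond : ∀ w s t : A, s ≠ t → P s w → P t w → P s t ∨ P t s)
    (pp : PathPartition A P) (hmin : pp.Minimal)
    (π : A ≃ ZMod n) (hπ : IsPhi n pp π)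
    (hblock : ∃ i j : A, blockingPair (cycleSeatGraph n) P π i j ∧
      (cycleSeatGraph n).Adj (π i) (π j)) :
    ∃ (pp' : PathPartition A P) (ρ : A ≃ ZMod n), pp'.Minimal ∧ IsPhi n pp' ρ ∧
      Set.ncard {j : ZMod n | P (π.symm j) (π.symm (j + 1))} + 1 ≤
        Set.ncard {j : ZMod n | P (ρ.symm j) (ρ.symm (j + 1))} := by
  classical
  haveI : NeZero n := ⟨by omega⟩
  have hA : Nonempty A := Fintype.card_pos_iff.1 (by omega)
  obtain ⟨a₀⟩ := hA
  -- orient the blocking pair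
  obtain ⟨x0, y0, hbp0, hadj0⟩ := hblock
  rw [cycleSeatGraph, SimpleGraph.fromRel_adj] at hadj0
  obtain ⟨i, j, hb, hadj⟩ : ∃ i j : A,
      blockingPair (cycleSeatGraph n) P π i j ∧ π j = π i + 1 := by
    rcases hadj0.2 with h | h
    · exact ⟨x0, y0, hbp0, h⟩
    · exact ⟨y0, x0, ⟨hbp0.2, hbp0.1⟩, h⟩
  obtain ⟨hPib, hnPia, hPja, hnPjb⟩ := blocking_facts hn π hb hadj
  set a := π.symm (π i - 1) with hadef
  set b := π.symm (π i + 2) with hbdef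
  have hπa : π a = π i - 1 := by rw [hadef, Equiv.apply_symm_apply]
  have hπb : π b = π i + 2 := by rw [hbdef, Equiv.apply_symm_apply]
  have hsymm_j : π.symm (π i + 1) = j := by rw [← hadj, Equiv.symm_apply_apply]
  have hsymm_i : π.symm (π i) = i := Equiv.symm_apply_apply π i
  have hsymm_b : π.symm (π i + 1 + 1) = b := by
    rw [show π i + 1 + 1 = π i + 2 by ring]
  have hij : i ≠ j := by
    intro h
    rw [h] at hadj
    exact zmod_one_ne_zero hn (by linear_combination -hadj)
  have haj : a ≠ j := by
    intro h
    rw [h] at hPja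
    exact hP j hPja
  have hbi : b ≠ i := by
    intro h
    rw [h] at hPib
    exact hP i hPib
  have hab : a ≠ b := by
    intro h
    rw [h] at hnPia
    exact hnPia hPib
  have hbj : b ≠ j := by
    intro h
    rw [h] at hπb
    rw [hadj] at hπb
    exact zmod_one_ne_zero hn (by linear_combination -hπb)
  have hai : a ≠ i := by
    intro h
    rw [h] at hπa
    exact zmod_one_ne_zero hn (by linear_combination hπa)
  -- global sizes
  have flen : pp.paths.flatten.length = n := (flatten_length pp).trans hcard
  have hfne : pp.paths.flatten ≠ [] := by
    intro h
    rw [h] at flen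
    simp at flen
    omega
  have hLLne : pp.paths ≠ [] := fun h => hfne (by rw [h]; rfl)
  have hk1 : 1 ≤ pp.paths.length := List.length_pos_iff.2 hLLne
  -- dichotomy at the (j, b) adjacency
  rcases phi_dichotomy hn hcard a₀ pp π hπ (π i + 1) with
    ⟨Q0, hQ0, l1, l2, hdec⟩ | ⟨m2, hm2, hj2, hb2⟩
  · -- (j,b) consecutive in a path would give P j b
    exfalso
    have hchQ := pp.chains Q0 hQ0
    rw [hdec] at hchQ
    have hPjb := chain_mid hchQ
    rw [hsymm_j, hsymm_b] at hPjb
    exact hnPjb hPjb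
  rw [hsymm_j] at hj2
  rw [hsymm_b] at hb2
  set Q := pp.paths.getD m2 [] with hQdef
  set mB := (m2 + 1) % pp.paths.length with hmBdef
  set B := pp.paths.getD mB [] with hBdef
  have hmBlt : mB < pp.paths.length := Nat.mod_lt _ (by omega)
  have hQmem : Q ∈ pp.paths := getD_mem [] pp.paths hm2
  have hBmem : B ∈ pp.paths := getD_mem [] pp.paths hmBlt
  have hQne : Q ≠ [] := pp.nonempty Q hQmem
  have hBne : B ≠ [] := pp.nonempty B hBmem
  have hQlen : 1 ≤ Q.length := List.length_pos_iff.2 hQne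
  have hBlen : 1 ≤ B.length := List.length_pos_iff.2 hBne
  have hjQ : j ∈ Q := by
    rw [hj2]
    exact getD_mem a₀ Q (by omega)
  have hbB : b ∈ B := by
    rw [hb2]
    exact getD_mem a₀ B (by omega)
  have hndQ : Q.Nodup := (List.nodup_flatten.1 pp.nodup).1 Q hQmem
  by_cases hWrap : mB = m2
  · -- wrap case : single path
    have hW2 : (m2 + 1) % pp.paths.length = m2 := by rw [← hmBdef]; exact hWrap
    have hkk : pp.paths.length = 1 := by
      rcases Nat.lt_or_ge (m2 + 1) pp.paths.length with h | h
      · rw [Nat.mod_eq_of_lt h] at hW2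
        omega
      · have he : m2 + 1 = pp.paths.length := by omega
        rw [he, Nat.mod_self] at hW2
        omega
    have hBQeq : B = Q := by rw [hBdef, hQdef, hWrap]
    have hbQ : b = Q.getD 0 a₀ := by rw [hb2, hBQeq]
    obtain ⟨q0, hq0⟩ := List.length_eq_one_iff.1 hkk
    have hLL1 : pp.paths = [Q] := by
      rw [hq0]
      congr 1
      rw [hQdef, hq0, show m2 = 0 by omega]
      rfl
    have hfQ : pp.paths.flatten = Q := by rw [hLL1]; simp
    rcases phi_dichotomy hn hcard a₀ pp π hπ (π i) with
      ⟨Q1, hQ1, l1', l2', hdec1⟩ | ⟨m1, hm1, hi1, hj1⟩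
    · -- chain case : Q = l1' ++ [i, j]
      rw [hsymm_i, hsymm_j] at hdec1
      rw [hLL1, List.mem_singleton] at hQ1
      rw [hQ1] at hdec1
      have hl2nil : l2' = [] := last_forces_nil a₀ hndQ hdec1 hj2.symm
      rw [hl2nil] at hdec1
      have hQL : Q = (l1' ++ [i]) ++ [j] := by rw [hdec1]; simp
      set L := l1' ++ [i] with hLdef
      have hLne : L ≠ [] := by simp [hLdef]
      have hchQ2 := pp.chains Q hQmem
      rw [hQL] at hchQ2
      have hchL : L.Chain' P := (List.isChain_append.1 hchQ2).1
      have hjL : j ∉ L := by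
        intro h
        rw [hQL] at hndQ
        exact List.disjoint_of_nodup_append hndQ h (by simp)
      have hlastL : L.getD (L.length - 1) a₀ = i := by
        rw [hLdef, getD_last_append a₀ _ _ (by simp)]
        simp
      have haQ : a ∈ Q := by rw [← hfQ]; exact pp.complete a
      have haL : a ∈ L := by
        rw [hQL] at haQ
        rcases List.mem_append.1 haQ with h | h
        · exact h
        · simp only [List.mem_singleton] at h
          exact absurd h haj
      have hheadQL : Q.getD 0 a₀ = L.getD 0 a₀ := by
        rw [hQL]
        exact getD_zero_append a₀ _ _ hLne
      have hLheadb : L.getD 0 a₀ = b := by rw [← hheadQL, ← hbQ]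
      obtain ⟨Lnew, hpermN, hchN, hlastN, hheadN⟩ :=
        insert_into hcond a₀ L j a hchL hjL haL hPja
      have hheadNb : Lnew.getD 0 a₀ = b := by
        rcases hheadN with h | h
        · rw [h, hLheadb]
        · rw [hLheadb] at h
          exact absurd h hnPjb
      have hLnewne : Lnew ≠ [] := by
        intro h
        have := hpermN.length_eq
        rw [h] at this
        simp at this
      have hpermF : ([Lnew] : List (List A)).flatten.Perm pp.paths.flatten := by
        have h1 : ([Lnew] : List (List A)).flatten = Lnew := by simp
        rw [h1, hfQ, hQL]
        exact hpermN.trans (List.perm_append_singleton j L).symm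
      have hne2 : ∀ l ∈ ([Lnew] : List (List A)), l ≠ [] := by
        intro l hl
        rw [List.mem_singleton] at hl
        rw [hl]
        exact hLnewne
      have hch2 : ∀ l ∈ ([Lnew] : List (List A)), l.Chain' P := by
        intro l hl
        rw [List.mem_singleton] at hl
        rw [hl]
        exact hchN
      refine ⟨rebuild pp [Lnew] hne2 hch2 hpermF, ?_⟩
      obtain ⟨ρ, hρ⟩ := exists_phi (show 0 < n by omega) hcard (rebuild pp [Lnew] hne2 hch2 hpermF)
      refine ⟨ρ, ?_, hρ, ?_⟩
      · intro i1 j1 h1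
        exfalso
        apply h1
        have hi1' := i1.isLt
        have hj1' := j1.isLt
        apply Fin.ext
        simp only [rebuild, List.length_singleton] at hi1' hj1'
        omega
      · rw [alpha_count hn hcard a₀ pp π hπ, alpha_count hn hcard a₀ _ ρ hρ]
        have hp2f : (rebuild pp [Lnew] hne2 hch2 hpermF).paths.flatten = Lnew := by
          simp [rebuild]
        have hQlenn : Q.length = n := by rw [← hfQ]; exact flen
        have hLnewlen : Lnew.length = n := by
          have h1 := hpermN.length_eq
          have hLQ : L.length + 1 = Q.length := by rw [hQL]; simp
          simp only [List.length_cons] at h1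
          omega
        rw [hfQ, hp2f]
        rw [cycCount_eq P a₀ Q hQne, cycCount_eq P a₀ Lnew hLnewne]
        have hwrapold : pind P (Q.getD (Q.length - 1) a₀) (Q.getD 0 a₀) = 0 := by
          apply pind_neg
          rw [← hj2, ← hbQ]
          exact hnPjb
        have hwrapnew : pind P (Lnew.getD (Lnew.length - 1) a₀) (Lnew.getD 0 a₀) = 1 := by
          apply pind_pos
          rw [hlastN, hlastL, hheadNb]
          exact hPib
        have hlinQ := linCount_le P a₀ Q
        have hlinN : linCount P a₀ Lnew = Lnew.length - 1 := linCount_chain P a₀ Lnew hchN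
        omega
    · -- boundary case : j would be the head, so j = b
      exfalso
      rw [hsymm_j] at hj1
      have hmod : (m1 + 1) % pp.paths.length = m2 := by
        rw [hkk, Nat.mod_one]
        omega
      rw [hmod, ← hQdef] at hj1
      apply hbj
      rw [hbQ, ← hj1]
  · -- main case : at least two paths
    have hk2 : 2 ≤ pp.paths.length := by
      by_contra hlt
      have hkk : pp.paths.length = 1 := by omega
      apply hWrap
      omega
    have hjB : j ∉ B := fun h => paths_disjoint pp hm2 hmBlt (fun h' => hWrap h'.symm) hjQ h
    have hBQ : B ≠ Q := by
      intro h
      rw [h] at hjB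
      exact hjB hjQ
    rcases phi_dichotomy hn hcard a₀ pp π hπ (π i) with
      ⟨Q1, hQ1, l1', l2', hdec1⟩ | ⟨m1, hm1, hi1, hj1⟩
    · -- (i, j) consecutive in a path Q1 = Q
      rw [hsymm_i, hsymm_j] at hdec1
      have hjQ1 : j ∈ Q1 := by
        rw [hdec1]
        simp
      have hQ1Q : Q1 = Q := by
        by_contra hne'
        exact paths_disjoint_of_ne pp hQ1 hQmem hne' hjQ1 hjQ
      rw [hQ1Q] at hdec1
      have hl2nil : l2' = [] := last_forces_nil a₀ hndQ hdec1 hj2.symm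
      rw [hl2nil] at hdec1
      have hQL : Q = (l1' ++ [i]) ++ [j] := by
        rw [hdec1]
        simp
      set L := l1' ++ [i] with hLdef
      have hLne : L ≠ [] := by simp [hLdef]
      have hchQ2 := pp.chains Q hQmem
      rw [hQL] at hchQ2
      have hchL : L.Chain' P := (List.isChain_append.1 hchQ2).1
      have hjL : j ∉ L := by
        intro h
        rw [hQL] at hndQ
        exact List.disjoint_of_nodup_append hndQ h (by simp)
      have hlastL : L.getD (L.length - 1) a₀ = i := by
        rw [hLdef, getD_last_append a₀ _ _ (by simp)]
        simp
      have hPij : P i j := by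
        have := chain_mid (l1 := l1') (l2 := []) (by rw [← hdec1]; exact pp.chains Q hQmem)
        exact this
      by_cases haQ : a ∈ Q
      · -- insert j into L, merge with B
        have haL : a ∈ L := by
          rw [hQL] at haQ
          rcases List.mem_append.1 haQ with h | h
          · exact h
          · simp only [List.mem_singleton] at h
            exact absurd h haj
        obtain ⟨Lnew, hpermN, hchN, hlastN, _⟩ :=
          insert_into hcond a₀ L j a hchL hjL haL hPja
        obtain ⟨rest, hpermLL, hlenrest, hsub⟩ := extract_two hQmem hBmem hBQ
        have hLnewne : Lnew ≠ [] := by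
          intro h
          have := hpermN.length_eq
          rw [h] at this
          simp at this
        have hlastN' : Lnew.getD (Lnew.length - 1) a₀ = i := by rw [hlastN, hlastL]
        refine improve hn hcard a₀ pp hmin π hπ ((Lnew ++ B) :: rest) ?_ ?_ ?_ ?_ hk2
        · intro l hl
          rcases List.mem_cons.1 hl with rfl | hl'
          · intro h
            exact hBne (List.append_eq_nil_iff.1 h).2
          · exact pp.nonempty l (hsub l hl')
        · intro l hl
          rcases List.mem_cons.1 hl with rfl | hl'
          · apply List.isChain_append.2
            refine ⟨hchN, pp.chains B hBmem, ?_⟩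
            intro x hx y hy
            rw [getLast?_eq_getD a₀ _ hLnewne] at hx
            rw [head?_eq_getD a₀ _ hBne] at hy
            simp only [Option.mem_def, Option.some_inj] at hx hy
            rw [← hx, ← hy, hlastN', ← hb2]
            exact hPib
          · exact pp.chains l (hsub l hl')
        · have h2 := hpermLL.flatten
          have hQN : Lnew.Perm Q := by
            rw [hQL]
            exact hpermN.trans (List.perm_append_singleton j L).symm
          have h7 := hQN.append_right (B ++ rest.flatten)
          have h5 : ((Lnew ++ B) :: rest).flatten = Lnew ++ (B ++ rest.flatten) := by simp
          have h6 : (Q :: B :: rest).flatten = Q ++ (B ++ rest.flatten) := by simp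
          rw [h5]
          rw [h6] at h2
          exact h7.trans h2.symm
        · simp only [List.length_cons]
          omega
      · -- a in another path R
        obtain ⟨R, hRmem, haR⟩ := List.mem_flatten.1 (pp.complete a)
        have hRQ : R ≠ Q := fun h => haQ (h ▸ haR)
        have hjR : j ∉ R := fun h => paths_disjoint_of_ne pp hRmem hQmem hRQ h hjQ
        obtain ⟨Rnew, hpermR, hchR, hlastR, hheadR⟩ :=
          insert_into hcond a₀ R j a (pp.chains R hRmem) hjR haR hPja
        by_cases hRB : R = B
        · -- j is inserted into B itself
          have hbR : R.getD 0 a₀ = b := by rw [hRB, ← hb2]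
          have hheadRnew : Rnew.getD 0 a₀ = b := by
            rcases hheadR with h | h
            · rw [h, hbR]
            · rw [hbR] at h
              exact absurd h hnPjb
          have hRnewne : Rnew ≠ [] := by
            intro h
            have := hpermR.length_eq
            rw [h] at this
            simp at this
          obtain ⟨rest, hpermLL, hlenrest, hsub⟩ := extract_two hQmem hBmem hBQ
          refine improve hn hcard a₀ pp hmin π hπ ((L ++ Rnew) :: rest) ?_ ?_ ?_ ?_ hk2
          · intro l hl
            rcases List.mem_cons.1 hl with rfl | hl'
            · intro h
              exact hLne (List.append_eq_nil_iff.1 h).1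
            · exact pp.nonempty l (hsub l hl')
          · intro l hl
            rcases List.mem_cons.1 hl with rfl | hl'
            · apply List.isChain_append.2
              refine ⟨hchL, hchR, ?_⟩
              intro x hx y hy
              rw [getLast?_eq_getD a₀ _ hLne] at hx
              rw [head?_eq_getD a₀ _ hRnewne] at hy
              simp only [Option.mem_def, Option.some_inj] at hx hy
              rw [← hx, ← hy, hlastL, hheadRnew]
              exact hPib
            · exact pp.chains l (hsub l hl')
          · have h2 := hpermLL.flatten
            have h5 : ((L ++ Rnew) :: rest).flatten = L ++ (Rnew ++ rest.flatten) := by simp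
            have h6 : (Q :: B :: rest).flatten = Q ++ (B ++ rest.flatten) := by simp
            have h8 : (Rnew ++ rest.flatten).Perm (j :: (B ++ rest.flatten)) := by
              have h9 := hpermR.append_right rest.flatten
              rw [hRB] at h9
              simpa using h9
            have h10 : Q ++ (B ++ rest.flatten) = L ++ (j :: (B ++ rest.flatten)) := by
              rw [hQL]
              simp
            rw [h5]
            rw [h6, h10] at h2
            exact (h8.append_left L).trans h2.symm
          · simp only [List.length_cons]
            omega
        · -- R, B, Q all distinct
          obtain ⟨rest2, hperm2, hlen2, hsub2⟩ := extract_two hQmem hBmem hBQ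
          have hR2 : R ∈ rest2 := by
            have := hperm2.mem_iff.1 hRmem
            simp only [List.mem_cons] at this
            rcases this with h | h | h
            · exact absurd h hRQ
            · exact absurd h hRB
            · exact h
          obtain ⟨rest3, hperm3, hlen3, hsub3⟩ := extract_one hR2
          have hRnewne : Rnew ≠ [] := by
            intro h
            have := hpermR.length_eq
            rw [h] at this
            simp at this
          refine improve hn hcard a₀ pp hmin π hπ ((L ++ B) :: Rnew :: rest3) ?_ ?_ ?_ ?_ hk2
          · intro l hl
            rcases List.mem_cons.1 hl with rfl | hl'
            · intro h
              exact hLne (List.append_eq_nil_iff.1 h).1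
            · rcases List.mem_cons.1 hl' with rfl | hl''
              · exact hRnewne
              · exact pp.nonempty l (hsub2 l (hsub3 l hl''))
          · intro l hl
            rcases List.mem_cons.1 hl with rfl | hl'
            · apply List.isChain_append.2
              refine ⟨hchL, pp.chains B hBmem, ?_⟩
              intro x hx y hy
              rw [getLast?_eq_getD a₀ _ hLne] at hx
              rw [head?_eq_getD a₀ _ hBne] at hy
              simp only [Option.mem_def, Option.some_inj] at hx hy
              rw [← hx, ← hy, hlastL, ← hb2]
              exact hPib
            · rcases List.mem_cons.1 hl' with rfl | hl''
              · exact hchR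
              · exact pp.chains l (hsub2 l (hsub3 l hl''))
          · have s1 : (Rnew ++ rest3.flatten).Perm (j :: (R ++ rest3.flatten)) := by
              have := hpermR.append_right rest3.flatten
              simpa using this
            have s2 : (B ++ (Rnew ++ rest3.flatten)).Perm
                (j :: (B ++ (R ++ rest3.flatten))) :=
              (s1.append_left B).trans List.perm_middle
            have s3 := s2.append_left L
            have s4 : L ++ (j :: (B ++ (R ++ rest3.flatten)))
                = Q ++ (B ++ (R ++ rest3.flatten)) := by
              rw [hQL]
              simp
            have s5 : pp.paths.flatten.Perm (Q ++ (B ++ rest2.flatten)) := by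
              have := hperm2.flatten
              simpa using this
            have s6 : (Q ++ (B ++ rest2.flatten)).Perm
                (Q ++ (B ++ (R ++ rest3.flatten))) := by
              have h7 := hperm3.flatten
              have h8 : (R :: rest3).flatten = R ++ rest3.flatten := rfl
              rw [h8] at h7
              exact (h7.append_left B).append_left Q
            have hflatLL' : ((L ++ B) :: Rnew :: rest3).flatten
                = L ++ (B ++ (Rnew ++ rest3.flatten)) := by simp
            rw [hflatLL']
            rw [s4] at s3
            exact s3.trans (s5.trans s6).symm
          · simp only [List.length_cons]
            omega
    · -- i is the tail of some path, j is the head of the next : Q = [j]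
      rw [hsymm_j] at hj1
      set mJ := (m1 + 1) % pp.paths.length with hmJdef
      have hmJlt : mJ < pp.paths.length := Nat.mod_lt _ (by omega)
      have hmJne : pp.paths.getD mJ [] ≠ [] := pp.nonempty _ (getD_mem [] pp.paths hmJlt)
      have hjmJ : j ∈ pp.paths.getD mJ [] := by
        rw [hj1]
        exact getD_mem a₀ _ (List.length_pos_iff.2 hmJne)
      have hmJm2 : mJ = m2 := path_index_unique pp hmJlt hm2 hjmJ hjQ
      rw [hmJm2, ← hQdef] at hj1
      have hhl : Q.getD 0 a₀ = Q.getD (Q.length - 1) a₀ := by rw [← hj1, ← hj2]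
      have hQsing : Q = [j] := by
        have h := eq_singleton_of_head_eq_last a₀ hndQ hQne hhl
        rw [← hj1] at h
        exact h
      have haQ : a ∉ Q := by
        rw [hQsing]
        simp only [List.mem_singleton]
        exact haj
      obtain ⟨R, hRmem, haR⟩ := List.mem_flatten.1 (pp.complete a)
      have hRQ : R ≠ Q := fun h => haQ (h ▸ haR)
      have hjR : j ∉ R := fun h => paths_disjoint_of_ne pp hRmem hQmem hRQ h hjQ
      obtain ⟨Rnew, hpermR, hchR, hlastR, hheadR⟩ :=
        insert_into hcond a₀ R j a (pp.chains R hRmem) hjR haR hPja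
      obtain ⟨rest, hpermLL, hlenrest, hsub⟩ := extract_two hQmem hRmem hRQ
      have hRnewne : Rnew ≠ [] := by
        intro h
        have := hpermR.length_eq
        rw [h] at this
        simp at this
      refine improve hn hcard a₀ pp hmin π hπ (Rnew :: rest) ?_ ?_ ?_ ?_ hk2
      · intro l hl
        rcases List.mem_cons.1 hl with rfl | hl'
        · exact hRnewne
        · exact pp.nonempty l (hsub l hl')
      · intro l hl
        rcases List.mem_cons.1 hl with rfl | hl'
        · exact hchR
        · exact pp.chains l (hsub l hl')
      · have h2 := hpermLL.flatten
        have h3 : (Q :: R :: rest).flatten = j :: (R ++ rest.flatten) := by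
          rw [hQsing]
          simp
        have h4 : (Rnew :: rest).flatten = Rnew ++ rest.flatten := rfl
        have h5 : (Rnew ++ rest.flatten).Perm (j :: (R ++ rest.flatten)) := by
          have := hpermR.append_right rest.flatten
          simpa using this
        rw [h4]
        rw [h3] at h2
        exact h5.trans h2.symm
      · simp only [List.length_cons]
        omega
end

section
/- Let n ≥ 3 and let A be a set of n agents with an irreflexive preference relation P. Suppose there exist three pairwise distinct agents s, t, w ∈ A such that s approves w, t approves w, s does not approve t, and t does not approve s. Then there exists a neighborhood stable assignment of the agents to the vertices of the cycle seat graph C_n. -/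
lemma cyc_one_ne (n : ℕ) (hn : 3 ≤ n) : (1 : ZMod n) ≠ 0 := by
  haveI : NeZero n := ⟨by omega⟩
  haveI : Fact (1 < n) := ⟨by omega⟩
  intro hh; have := ZMod.val_one n; rw [hh] at this; simp at this

lemma cyc_two_ne (n : ℕ) (hn : 3 ≤ n) : (2 : ZMod n) ≠ 0 := by
  haveI : NeZero n := ⟨by omega⟩
  have : ((2:ℕ):ZMod n) ≠ 0 := by
    intro hh
    have h2 := (ZMod.natCast_eq_zero_iff 2 n).mp hh
    have := Nat.le_of_dvd (by norm_num) h2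
    omega
  simpa using this

lemma cyc_adj (n : ℕ) (hn : 3 ≤ n) (u v : ZMod n) :
    (cycleSeatGraph n).Adj u v ↔ v = u + 1 ∨ v = u - 1 := by
  have h1 := cyc_one_ne n hn
  simp only [cycleSeatGraph, SimpleGraph.fromRel_adj]
  constructor
  · rintro ⟨hne, h | h⟩
    · exact Or.inl h
    · right; rw [h]; ring
  · rintro (h | h)
    · refine ⟨?_, Or.inl h⟩
      rw [h]; intro hc; exact h1 (by linear_combination -hc)
    · refine ⟨?_, Or.inr ?_⟩
      · rw [h]; intro hc; exact h1 (by linear_combination hc)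
      · rw [h]; ring

open scoped Classical in
lemma utility_eq {A : Type*} {n : ℕ} (hn : 3 ≤ n) (P : A → A → Prop) (π : A ≃ ZMod n) (i : A) :
    utility (cycleSeatGraph n) P π i =
      (if P i (π.symm (π i + 1)) then 1 else 0) + (if P i (π.symm (π i - 1)) then 1 else 0) := by
  set u := π i with hu
  have hne : u + 1 ≠ u - 1 := by
    intro h; exact cyc_two_ne n hn (by linear_combination h)
  have hmem : ∀ v : ZMod n, v ∈ {v : ZMod n | (cycleSeatGraph n).Adj (π i) v ∧ P i (π.symm v)}
      ↔ ((v = u + 1 ∨ v = u - 1) ∧ P i (π.symm v)) := by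
    intro v
    simp only [Set.mem_setOf_eq, cyc_adj n hn, ← hu]
  by_cases hq1 : P i (π.symm (u+1)) <;> by_cases hq2 : P i (π.symm (u-1))
  · have hset : {v : ZMod n | (cycleSeatGraph n).Adj (π i) v ∧ P i (π.symm v)} = {u+1, u-1} := by
      ext v
      rw [hmem v]
      constructor
      · rintro ⟨h, _⟩; simpa using h
      · rintro (rfl | rfl) <;> simp_all
    rw [utility, hset, Set.ncard_pair hne]
    simp [hq1, hq2]
  · have hset : {v : ZMod n | (cycleSeatGraph n).Adj (π i) v ∧ P i (π.symm v)} = {u+1} := by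
      ext v
      rw [hmem v]
      constructor
      · rintro ⟨rfl | rfl, hP⟩
        · simp
        · exact absurd hP hq2
      · rintro rfl; exact ⟨Or.inl rfl, hq1⟩
    rw [utility, hset, Set.ncard_singleton]
    simp [hq1, hq2]
  · have hset : {v : ZMod n | (cycleSeatGraph n).Adj (π i) v ∧ P i (π.symm v)} = {u-1} := by
      ext v
      rw [hmem v]
      constructor
      · rintro ⟨rfl | rfl, hP⟩
        · exact absurd hP hq1
        · simp
      · rintro rfl; exact ⟨Or.inr rfl, hq2⟩
    rw [utility, hset, Set.ncard_singleton]
    simp [hq1, hq2]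
  · have hset : {v : ZMod n | (cycleSeatGraph n).Adj (π i) v ∧ P i (π.symm v)} = ∅ := by
      ext v
      rw [hmem v]
      simp only [Set.mem_empty_iff_false, iff_false]
      rintro ⟨rfl | rfl, hP⟩
      · exact hq1 hP
      · exact hq2 hP
    rw [utility, hset, Set.ncard_empty]
    simp [hq1, hq2]

lemma swap_ne {A : Type*} [DecidableEq A] (i j x : A) (h1 : x ≠ i) (h2 : x ≠ j) :
    Equiv.swap i j x = x := Equiv.swap_apply_of_ne_of_ne h1 h2

lemma envies_char {A : Type*} [DecidableEq A] {n : ℕ} (hn : 3 ≤ n) (P : A → A → Prop)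
    (π : A ≃ ZMod n) (i j : A) (hadj : π j = π i + 1) :
    envies (cycleSeatGraph n) P π i j ↔
      P i (π.symm (π i + 1 + 1)) ∧ ¬ P i (π.symm (π i - 1)) := by
  classical
  have h1 := cyc_one_ne n hn
  have h2 := cyc_two_ne n hn
  set u := π i with hu
  set π' := (Equiv.swap i j).trans π with hπ'
  have hij : i ≠ j := by
    intro h
    subst h
    have : u + 1 = u := by rw [hu]; exact hadj.symm
    exact h1 (by linear_combination this)
  have hsymm : ∀ v, π'.symm v = Equiv.swap i j (π.symm v) := by
    intro v
    rw [hπ', Equiv.symm_trans_apply, Equiv.symm_swap]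
  have hπ'i : π' i = u + 1 := by
    rw [hπ', Equiv.trans_apply, Equiv.swap_apply_left, hadj]
  have e1 : π.symm (u + 1) = j := by rw [← hadj]; exact π.symm_apply_apply j
  have e2 : π'.symm (π' i + 1) = π.symm (u + 1 + 1) := by
    rw [hπ'i, hsymm]
    apply swap_ne
    · intro h
      have hc := congrArg π h
      rw [Equiv.apply_symm_apply, ← hu] at hc
      exact h2 (by linear_combination hc)
    · intro h
      have hc := congrArg π h
      rw [Equiv.apply_symm_apply, hadj] at hc
      exact h1 (by linear_combination hc)
  have e3 : π'.symm (π' i - 1) = j := by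
    rw [hπ'i]
    have : u + 1 - 1 = u := by ring
    rw [this, hsymm, hu, π.symm_apply_apply, Equiv.swap_apply_left]
  rw [envies, utility_eq hn P π i, utility_eq hn P π' i, e2, e3, ← hu, e1]
  by_cases hA : P i (π.symm (u + 1 + 1)) <;> by_cases hB : P i (π.symm (u - 1)) <;>
    by_cases hC : P i j <;> simp [hA, hB, hC]

lemma envies_char' {A : Type*} [DecidableEq A] {n : ℕ} (hn : 3 ≤ n) (P : A → A → Prop)
    (π : A ≃ ZMod n) (i j : A) (hadj : π j = π i + 1) :
    envies (cycleSeatGraph n) P π j i ↔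
      P j (π.symm (π i - 1)) ∧ ¬ P j (π.symm (π i + 1 + 1)) := by
  classical
  have h1 := cyc_one_ne n hn
  have h2 := cyc_two_ne n hn
  set u := π i with hu
  set π' := (Equiv.swap j i).trans π with hπ'
  have hij : i ≠ j := by
    intro h
    subst h
    have : u + 1 = u := by rw [hu]; exact hadj.symm
    exact h1 (by linear_combination this)
  have hsymm : ∀ v, π'.symm v = Equiv.swap j i (π.symm v) := by
    intro v
    rw [hπ', Equiv.symm_trans_apply, Equiv.symm_swap]
  have hπ'j : π' j = u := by
    rw [hπ', Equiv.trans_apply, Equiv.swap_apply_left, hu]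
  have e1 : π.symm (π j + 1) = π.symm (u + 1 + 1) := by rw [hadj]
  have e2 : π.symm (π j - 1) = i := by
    rw [hadj]
    have : u + 1 - 1 = u := by ring
    rw [this, hu, π.symm_apply_apply]
  have e3 : π'.symm (π' j + 1) = i := by
    rw [hπ'j, hsymm, ← hadj, π.symm_apply_apply, Equiv.swap_apply_left]
  have e4 : π'.symm (π' j - 1) = π.symm (u - 1) := by
    rw [hπ'j, hsymm]
    apply swap_ne
    · intro h
      have hc := congrArg π h
      rw [Equiv.apply_symm_apply, hadj] at hc
      exact h2 (by linear_combination -hc)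
    · intro h
      have hc := congrArg π h
      rw [Equiv.apply_symm_apply, ← hu] at hc
      exact h1 (by linear_combination -hc)
  rw [envies, utility_eq hn P π j, utility_eq hn P π' j, e1, e2, e3, e4]
  by_cases hA : P j (π.symm (u + 1 + 1)) <;> by_cases hB : P j (π.symm (u - 1)) <;>
    by_cases hC : P j i <;> simp [hA, hB, hC]

def GoodSeq {A : Type*} (P : A → A → Prop) : List A → Prop
  | a :: b :: c :: l => (P b a ∨ ¬ P c a) ∧ GoodSeq P (b :: c :: l)
  | _ => True

lemma goodSeq_tail {A : Type*} (P : A → A → Prop) (a : A) (l : List A)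
    (h : GoodSeq P (a :: l)) : GoodSeq P l := by
  match l with
  | [] => trivial
  | [b] => trivial
  | b :: c :: l' => exact h.2

lemma goodSeq_getElem {A : Type*} (P : A → A → Prop) (p : ℕ) (z : List A)
    (hgood : GoodSeq P z) (hp : p + 2 < z.length) :
    P (z[p+1]'(by omega)) (z[p]'(by omega)) ∨ ¬ P (z[p+2]'hp) (z[p]'(by omega)) := by
  induction p generalizing z with
  | zero =>
    match z, hp with
    | a :: b :: c :: l, _ => exact hgood.1
  | succ p ih =>
    match z, hp with
    | a :: zs, hp =>
      have := ih zs (goodSeq_tail P a zs hgood) (by simp at hp; omega)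
      simpa using this

lemma exists_goodSeq {A : Type*} [DecidableEq A] (P : A → A → Prop) :
    ∀ (S : Finset A) (a : A), ∃ l : List A, l.toFinset = S ∧ l.Nodup ∧ GoodSeq P (a :: l) := by
  classical
  intro S
  induction S using Finset.strongInduction with
  | _ S ih =>
    intro a
    rcases S.eq_empty_or_nonempty with rfl | hne
    · exact ⟨[], by simp, by simp, trivial⟩
    · have hb : ∃ b ∈ S, P b a ∨ ∀ y ∈ S, ¬ P y a := by
        by_cases hex : ∃ y ∈ S, P y a
        · obtain ⟨b, hbS, hba⟩ := hex
          exact ⟨b, hbS, Or.inl hba⟩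
        · push_neg at hex
          obtain ⟨b, hbS⟩ := hne
          exact ⟨b, hbS, Or.inr hex⟩
      obtain ⟨b, hbS, hbprop⟩ := hb
      obtain ⟨l, hl, hnd, hgood⟩ := ih (S.erase b) (Finset.erase_ssubset hbS) b
      refine ⟨b :: l, ?_, ?_, ?_⟩
      · rw [List.toFinset_cons, hl, Finset.insert_erase hbS]
      · refine List.nodup_cons.mpr ⟨?_, hnd⟩
        intro hmem
        have : b ∈ S.erase b := by rw [← hl]; exact List.mem_toFinset.mpr hmem
        simp at this
      · match l, hgood with
        | [], _ => trivial
        | c :: l', hgood =>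
          refine ⟨?_, hgood⟩
          rcases hbprop with h | h
          · exact Or.inl h
          · refine Or.inr (h c ?_)
            have : c ∈ S.erase b := by rw [← hl]; simp
            exact Finset.mem_of_mem_erase this

lemma getElem_eq_of_eq {α : Type*} (L : List α) {a b : ℕ} (h : a = b) (ha : a < L.length) :
    L[a]'ha = L[b]'(h ▸ ha) := by subst h; rfl

/-- If there are three pairwise distinct agents `s, t, w` with `s → w`,
`t → w`, `s ↛ t` and `t ↛ s`, then there is a neighborhood stable assignment on the
cycle seat graph `C_n`. -/
theorem stmt10 {A : Type*} [Fintype A] [DecidableEq A] {n : ℕ} (hn : 3 ≤ n)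
    (hcard : Fintype.card A = n) (P : A → A → Prop) (hP : Irreflexive P)
    (s t w : A) (hst : s ≠ t) (hsw : s ≠ w) (htw : t ≠ w)
    (h1 : P s w) (h2 : P t w) (h3 : ¬ P s t) (h4 : ¬ P t s) :
    ∃ π : A ≃ ZMod n, NeighborhoodStable (cycleSeatGraph n) P π := by
  classical
  haveI : NeZero n := ⟨by omega⟩
  obtain ⟨l, hl, hnd, hgood⟩ := exists_goodSeq P (Finset.univ \ {s, w, t}) t
  have hmeml : ∀ x ∈ l, x ≠ s ∧ x ≠ w ∧ x ≠ t := by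
    intro x hx
    have : x ∈ Finset.univ \ ({s, w, t} : Finset A) := by rw [← hl]; exact List.mem_toFinset.mpr hx
    simp at this
    exact this
  have hllen : l.length = n - 3 := by
    rw [← List.toFinset_card_of_nodup hnd, hl]
    rw [Finset.card_sdiff_of_subset (Finset.subset_univ _), Finset.card_univ, hcard]
    have : ({s, w, t} : Finset A).card = 3 := by
      rw [Finset.card_insert_of_notMem (by simp [hst, hsw]),
        Finset.card_insert_of_notMem (by simpa using Ne.symm htw), Finset.card_singleton]
    rw [this]
  have hlen : (s :: w :: t :: l).length = n := by simp [hllen]; omega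
  have hndL : (s :: w :: t :: l).Nodup := by
    refine List.nodup_cons.mpr ⟨?_, List.nodup_cons.mpr ⟨?_, List.nodup_cons.mpr ⟨?_, hnd⟩⟩⟩
    · simp only [List.mem_cons]
      rintro (h | h | h)
      exacts [hsw h, hst h, (hmeml s h).1 rfl]
    · simp only [List.mem_cons]
      rintro (h | h)
      exacts [htw h.symm, (hmeml w h).2.1 rfl]
    · intro h; exact (hmeml t h).2.2 rfl
  have hvlt : ∀ v : ZMod n, v.val < (s :: w :: t :: l).length := fun v => by
    rw [hlen]; exact v.val_lt
  set occ : ZMod n → A := fun v => (s :: w :: t :: l)[v.val]'(hvlt v) with hoccdef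
  have hinj : Function.Injective occ := by
    intro v1 v2 h
    have := (List.Nodup.getElem_inj_iff hndL).mp h
    exact ZMod.val_injective n this
  have hbij : Function.Bijective occ := by
    rw [Fintype.bijective_iff_injective_and_card]
    exact ⟨hinj, by rw [ZMod.card, hcard]⟩
  refine ⟨(Equiv.ofBijective occ hbij).symm, ?_⟩
  set π := (Equiv.ofBijective occ hbij).symm with hπ
  have hπsymm : ∀ v, π.symm v = occ v := fun v => rfl
  have hval : ∀ (v : ZMod n) (c : ℕ), (v + (c : ZMod n)).val = (v.val + c) % n := by
    intro v c
    rw [ZMod.val_add, ZMod.val_natCast]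
    simp [Nat.add_mod]
  -- the key one-sided argument
  have key : ∀ i j : A, π j = π i + 1 → ¬ blockingPair (cycleSeatGraph n) P π i j := by
    intro i j hadj hbp
    obtain ⟨HA, HB⟩ := (envies_char hn P π i j hadj).mp hbp.1
    obtain ⟨HC, HD⟩ := (envies_char' hn P π i j hadj).mp hbp.2
    set v := π i with hv
    have hi : π.symm v = i := π.symm_apply_apply i
    have hj : π.symm (v + 1) = j := by rw [← hadj]; exact π.symm_apply_apply j
    have c2 : v + 1 + 1 = v + ((2:ℕ) : ZMod n) := by push_cast; ring
    have cm : v - 1 = v + ((n - 1 : ℕ) : ZMod n) := by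
      have h1' : ((n-1:ℕ) : ZMod n) = (n:ℕ) - 1 := by
        push_cast [Nat.cast_sub (by omega : 1 ≤ n)]
        ring
      rw [h1', ZMod.natCast_self]
      ring
    have c1 : v + 1 = v + ((1:ℕ) : ZMod n) := by push_cast; ring
    set k := v.val with hk
    have hkn : k < n := v.val_lt
    -- occupant as list element
    have hocc : ∀ c : ℕ, π.symm (v + (c : ZMod n)) = (s :: w :: t :: l)[(k + c) % n]'(by
        rw [hlen]; exact Nat.mod_lt _ (by omega)) := by
      intro c
      rw [hπsymm, hoccdef]
      exact getElem_eq_of_eq _ (hval v c) _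
    rw [c2, hocc 2] at HA HD
    rw [cm, hocc (n-1)] at HB HC
    have hkL : k < (s :: w :: t :: l).length := by rw [hlen]; exact hkn
    have hi' : (s :: w :: t :: l)[k]'hkL = i := hi
    have hj' : (s :: w :: t :: l)[(k+1) % n]'(by
        rw [hlen]; exact Nat.mod_lt _ (by omega)) = j := by
      rw [← hocc 1, ← c1]; exact hj
    -- now case on k
    rcases Nat.lt_or_ge k 3 with hk3 | hk3
    · have hcases : k = 0 ∨ k = 1 ∨ k = 2 := by omega
      rcases hcases with hk0 | hk0 | hk0
      · -- k = 0 : i = s, two ahead is t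
        rw [getElem_eq_of_eq _ (show (k + 2) % n = 2 by rw [Nat.mod_eq_of_lt] <;> omega)] at HA
        rw [getElem_eq_of_eq _ (show k = 0 from hk0)] at hi'
        simp only [List.getElem_cons_succ, List.getElem_cons_zero] at HA hi'
        rw [hi'] at h3
        exact h3 HA
      · -- k = 1 : occ(v+1) = t, occ(v-1) = s
        rw [getElem_eq_of_eq _ (show (k + 1) % n = 2 by rw [Nat.mod_eq_of_lt] <;> omega)] at hj'
        rw [getElem_eq_of_eq _ (show (k + (n-1)) % n = 0 by
          have hnn : k + (n-1) = n := by omega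
          simp [hnn])] at HC
        simp only [List.getElem_cons_succ, List.getElem_cons_zero] at HC hj'
        rw [hj'] at h4
        exact h4 HC
      · -- k = 2 : i = t, occ(v-1) = w
        rw [getElem_eq_of_eq _ (show (k + (n-1)) % n = 1 by
          have hnn : k + (n-1) = 1 + n := by omega
          rw [hnn, Nat.add_mod_right, Nat.mod_eq_of_lt] <;> omega)] at HB
        rw [getElem_eq_of_eq _ (show k = 2 from hk0)] at hi'
        simp only [List.getElem_cons_succ, List.getElem_cons_zero] at HB hi'
        rw [hi'] at h2
        exact HB h2
    · rcases Nat.lt_or_ge k (n-1) with hkn1 | hkn1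
      · -- 3 ≤ k ≤ n - 2 : use GoodSeq
        obtain ⟨p, hp⟩ : ∃ p, k = p + 3 := ⟨k - 3, by omega⟩
        rw [getElem_eq_of_eq _ (show (k + (n-1)) % n = p + 2 by
          have hnn : k + (n-1) = (p + 2) + n := by omega
          rw [hnn, Nat.add_mod_right, Nat.mod_eq_of_lt]; omega)] at HB HC
        rw [getElem_eq_of_eq _ (show (k + 1) % n = p + 4 by
          rw [Nat.mod_eq_of_lt] <;> omega)] at hj'
        rw [getElem_eq_of_eq _ (show k = p + 3 from hp)] at hi'
        have hp0 : p + 2 < (t :: l).length := by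
          simp only [List.length_cons, hllen]; omega
        have hgg := goodSeq_getElem P p (t :: l) hgood hp0
        have ei : (t :: l)[p+1]'(by simp only [List.length_cons, hllen]; omega) = i := hi'
        have ej : (t :: l)[p+2]'hp0 = j := hj'
        rcases hgg with hgg | hgg
        · refine HB ?_
          show P i ((t :: l)[p]'(by simp only [List.length_cons, hllen]; omega))
          rw [ei] at hgg
          exact hgg
        · refine hgg ?_
          show P ((t :: l)[p+2]'hp0) ((t :: l)[p]'(by simp only [List.length_cons, hllen]; omega))
          rw [ej]
          exact HC
      · -- k = n - 1 : occ(v+1) = s, occ(v+2) = w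
        rw [getElem_eq_of_eq _ (show (k + 1) % n = 0 by
          have hnn : k + 1 = n := by omega
          simp [hnn])] at hj'
        rw [getElem_eq_of_eq _ (show (k + 2) % n = 1 by
          have hnn : k + 2 = 1 + n := by omega
          rw [hnn, Nat.add_mod_right, Nat.mod_eq_of_lt] <;> omega)] at HD
        simp only [List.getElem_cons_succ, List.getElem_cons_zero] at HD hj'
        rw [hj'] at h1
        exact HD h1
  intro i j hbp hadj
  rw [cyc_adj n hn] at hadj
  rcases hadj with hadj | hadj
  · exact key i j hadj hbp
  · have : π i = π j + 1 := by rw [hadj]; ring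
    exact key j i this ⟨hbp.2, hbp.1⟩
end

section
/- There exists an irreflexive preference relation P on a set of 6 agents (namely, a directed 6-cycle: agents 1,…,6 where each agent i approves only agent i+1, indices modulo 6) such that on the seat graph consisting of two disjoint triangles (two disjoint copies of K_3), every assignment is neighborhood stable, yet no assignment is stable. -/
/-- The seat graph consisting of two disjoint triangles on `Fin 3 ⊕ Fin 3`. -/
def twoTriangles : SimpleGraph (Fin 3 ⊕ Fin 3) :=
  SimpleGraph.fromRel (fun x y => x.isLeft = y.isLeft)

/-- Abstract envy condition in terms of the side function `s`. -/
def Eb (s : ZMod 6 → Bool) (i j : ZMod 6) : Prop :=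
  (if s (i + 1) = s i then (1 : ℕ) else 0) <
    (if s (Equiv.swap i j (i + 1)) = s (Equiv.swap i j i) then (1 : ℕ) else 0)

instance (s : ZMod 6 → Bool) (i j : ZMod 6) : Decidable (Eb s i j) := by
  unfold Eb; infer_instance

lemma utility_eq_s12 (π : ZMod 6 ≃ (Fin 3 ⊕ Fin 3)) (i : ZMod 6) :
    utility twoTriangles (fun a b => b = a + 1) π i =
      if (π (i + 1)).isLeft = (π i).isLeft then 1 else 0 := by
  have hne : π i ≠ π (i + 1) := fun h =>
    (by decide : ∀ x : ZMod 6, x ≠ x + 1) i (π.injective h)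
  unfold utility
  by_cases h : (π (i + 1)).isLeft = (π i).isLeft
  · rw [if_pos h]
    have hset : {v : Fin 3 ⊕ Fin 3 | twoTriangles.Adj (π i) v ∧ (π.symm v = i + 1)} =
        {π (i + 1)} := by
      ext v
      simp only [Set.mem_setOf_eq, Set.mem_singleton_iff, twoTriangles,
        SimpleGraph.fromRel_adj, Equiv.symm_apply_eq]
      constructor
      · rintro ⟨_, rfl⟩; rfl
      · rintro rfl; exact ⟨⟨hne, Or.inl h.symm⟩, rfl⟩
    rw [hset, Set.ncard_singleton]
  · rw [if_neg h]
    have hset : {v : Fin 3 ⊕ Fin 3 | twoTriangles.Adj (π i) v ∧ (π.symm v = i + 1)} =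
        (∅ : Set (Fin 3 ⊕ Fin 3)) := by
      ext v
      simp only [Set.mem_setOf_eq, Set.mem_empty_iff_false, iff_false, not_and,
        twoTriangles, SimpleGraph.fromRel_adj, Equiv.symm_apply_eq]
      rintro ⟨_, hor⟩ rfl
      rcases hor with h' | h'
      · exact h h'.symm
      · exact h h'
    rw [hset, Set.ncard_empty]

lemma envies_iff (π : ZMod 6 ≃ (Fin 3 ⊕ Fin 3)) (i j : ZMod 6) :
    envies twoTriangles (fun a b => b = a + 1) π i j ↔
      Eb (fun k => (π k).isLeft) i j := by
  unfold envies Eb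
  rw [utility_eq_s12 π i, utility_eq_s12 ((Equiv.swap i j).trans π) i]
  simp only [Equiv.trans_apply]
  exact Iff.rfl

lemma nb_lemma : ∀ (s : ZMod 6 → Bool) (i j : ZMod 6), Eb s i j → Eb s j i → s i ≠ s j := by
  decide

lemma ex_lemma : ∀ s : ZMod 6 → Bool,
    (Finset.univ.filter (fun k => s k = true)).card = 3 →
      ∃ i j, Eb s i j ∧ Eb s j i := by
  decide

/-- For the directed 6-cycle preference relation (`i` approves only `i+1`,
indices mod 6) on the seat graph made of two disjoint triangles, every assignment is
neighborhood stable, yet no assignment is stable. -/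
theorem stmt12 :
    ∃ P : ZMod 6 → ZMod 6 → Prop,
      (∀ i j : ZMod 6, P i j ↔ j = i + 1) ∧ Irreflexive P ∧
      (∀ π : ZMod 6 ≃ (Fin 3 ⊕ Fin 3), NeighborhoodStable twoTriangles P π) ∧
      (∀ π : ZMod 6 ≃ (Fin 3 ⊕ Fin 3), ∃ i j : ZMod 6, blockingPair twoTriangles P π i j) := by
  refine ⟨fun a b => b = a + 1, fun i j => Iff.rfl, ?_, ?_, ?_⟩
  · intro i h
    exact (by decide : ∀ x : ZMod 6, x ≠ x + 1) i h
  · intro π i j hbp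
    obtain ⟨h1, h2⟩ := hbp
    have hs := nb_lemma (fun k => (π k).isLeft) i j
      ((envies_iff π i j).mp h1) ((envies_iff π j i).mp h2)
    intro hadj
    rw [twoTriangles, SimpleGraph.fromRel_adj] at hadj
    rcases hadj.2 with h' | h'
    · exact hs h'
    · exact hs h'.symm
  · intro π
    have hcard : (Finset.univ.filter (fun k => ((π k).isLeft : Bool) = true)).card = 3 := by
      have himg : (Finset.univ.filter (fun k => ((π k).isLeft : Bool) = true)).image π =
          Finset.univ.filter (fun v : Fin 3 ⊕ Fin 3 => v.isLeft = true) := by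
        ext v
        simp only [Finset.mem_image, Finset.mem_filter, Finset.mem_univ, true_and]
        constructor
        · rintro ⟨k, hk, rfl⟩; exact hk
        · intro hv; exact ⟨π.symm v, by simpa using hv, π.apply_symm_apply v⟩
      have hinj := Finset.card_image_of_injective
        (Finset.univ.filter (fun k => ((π k).isLeft : Bool) = true)) π.injective
      rw [himg] at hinj
      rw [← hinj]
      decide
    obtain ⟨i, j, h1, h2⟩ := ex_lemma (fun k => (π k).isLeft) hcard
    exact ⟨i, j, (envies_iff π i j).mpr h1, (envies_iff π j i).mpr h2⟩
end

section
/- Let A be a set of n agents with an irreflexive preference relation P, seated on the path seat graph P_n by the assignment π constructed greedily as follows: seat an arbitrary agent at v_1, and for k = 2, …, n seat at v_k an as-yet-unseated agent that approves the agent at v_{k−1} whenever such an agent exists, and otherwise an arbitrary unseated agent. Then for every index i with 2 ≤ i ≤ n, if the agent seated at v_i does not approve the agent seated at v_{i−1}, then neither the agent seated at v_{i+1} (if i+1 ≤ n) nor the agent seated at v_{i+2} (if i+2 ≤ n) approves the agent seated at v_{i−1}. -/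
/-- For the greedy assignment on the path `P_n` (seat `v_k` is filled by an
unseated agent approving the agent at `v_{k-1}` whenever possible, seats 0-indexed), if
the agent at `v_i` does not approve the agent at `v_{i-1}`, then neither the agent at
`v_{i+1}` nor the agent at `v_{i+2}` (when these seats exist) approves the agent at
`v_{i-1}`. -/
theorem stmt14 {A : Type*} [Fintype A] {n : ℕ} (hcard : Fintype.card A = n)
    (P : A → A → Prop) (hP : Irreflexive P) (π : A ≃ Fin n)
    (hgreedy : ∀ k : ℕ, (hk : k < n) → 1 ≤ k →
      (∃ l : A, k ≤ (π l : ℕ) ∧ P l (π.symm ⟨k - 1, by omega⟩)) →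
      P (π.symm ⟨k, hk⟩) (π.symm ⟨k - 1, by omega⟩)) :
    ∀ i : ℕ, (hi : i < n) → 1 ≤ i →
      ¬ P (π.symm ⟨i, hi⟩) (π.symm ⟨i - 1, by omega⟩) →
      (∀ h1 : i + 1 < n, ¬ P (π.symm ⟨i + 1, h1⟩) (π.symm ⟨i - 1, by omega⟩)) ∧
      (∀ h2 : i + 2 < n, ¬ P (π.symm ⟨i + 2, h2⟩) (π.symm ⟨i - 1, by omega⟩)) := by
  intro i hi h1i hnot
  constructor
  · intro h1 hp
    exact hnot (hgreedy i hi h1i ⟨π.symm ⟨i + 1, h1⟩, by simp, hp⟩)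
  · intro h2 hp
    exact hnot (hgreedy i hi h1i ⟨π.symm ⟨i + 2, h2⟩, by simp, hp⟩)
end

section
/- Let A be a finite set of agents with an irreflexive preference relation P whose restriction to A ∖ X is acyclic for some X ⊆ A, let G be a seat graph on |A| vertices, and let π be any assignment such that every agent of A ∖ X, when enumerated as s_1, s_2, …, s_m where each s_ℓ is a sink of the subgraph of P induced by the not-yet-enumerated agents of A ∖ X (i.e., s_ℓ approves no agent outside X ∪ {s_1, …, s_{ℓ−1}}), is assigned a seat maximizing its utility among the seats not taken by X ∪ {s_1, …, s_{ℓ−1}}. Then under π, no agent in A ∖ X envies any agent in A ∖ X that was enumerated later; in particular, every blocking pair under π contains at least one agent of X. -/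
/-- Suppose `X ⊆ A` is such that `P` restricted to `A \ X` is acyclic, the
agents of `A \ X` are enumerated as `s 0, s 1, …` so that each `s l` approves only agents
of `X` or earlier-enumerated agents, and each `s l` occupies a seat maximizing its
utility among the seats not taken by `X` or earlier-enumerated agents. Then no agent of
`A \ X` envies a later-enumerated agent of `A \ X`; in particular every blocking pair
contains an agent of `X`. -/
theorem stmt15 {A V : Type*} [Fintype A] [DecidableEq A] [Fintype V]
    (G : SimpleGraph V) (P : A → A → Prop) (hP : Irreflexive P)
    (hcard : Fintype.card V = Fintype.card A) (X : Set A)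
    (hacyc : ∀ a : A, ¬ Relation.TransGen (fun a b => P a b ∧ a ∉ X ∧ b ∉ X) a a)
    (m : ℕ) (s : Fin m → A) (hs_inj : Function.Injective s)
    (hs_range : ∀ a : A, a ∉ X ↔ ∃ l : Fin m, s l = a)
    (π : A ≃ V)
    (hsink : ∀ l : Fin m, ∀ b : A, P (s l) b → b ∈ X ∨ ∃ l' : Fin m, l' < l ∧ s l' = b)
    (hmax : ∀ l : Fin m, ∀ v : V,
      (∀ x : A, π x = v → x ∉ X ∧ ∀ l' : Fin m, s l' = x → l ≤ l') →
      Set.ncard {u : V | G.Adj v u ∧ P (s l) (π.symm u)} ≤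
        Set.ncard {u : V | G.Adj (π (s l)) u ∧ P (s l) (π.symm u)}) :
    (∀ l l' : Fin m, l < l' → ¬ envies G P π (s l) (s l')) ∧
    (∀ i j : A, blockingPair G P π i j → i ∈ X ∨ j ∈ X) := by
  have hnotin : ∀ l : Fin m, s l ∉ X := fun l => (hs_range (s l)).mpr ⟨l, rfl⟩
  have key : ∀ l l' : Fin m, l < l' → ¬ envies G P π (s l) (s l') := by
    intro l l' hll henv
    have hnP' : ¬ P (s l) (s l') := by
      intro hp
      rcases hsink l _ hp with hX | ⟨l'', hl'', he⟩
      · exact hnotin l' hX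
      · exact absurd hll (not_lt.mpr (hs_inj he ▸ hl'').le)
    have hnPl : ¬ P (s l) (s l) := hP _
    have hset : {v : V | G.Adj (((Equiv.swap (s l) (s l')).trans π) (s l)) v ∧
        P (s l) (((Equiv.swap (s l) (s l')).trans π).symm v)} =
        {u : V | G.Adj (π (s l')) u ∧ P (s l) (π.symm u)} := by
      ext v
      simp only [Set.mem_setOf_eq, Equiv.trans_apply, Equiv.symm_trans_apply,
        Equiv.symm_swap, Equiv.swap_apply_left]
      refine and_congr_right fun _ => ?_
      by_cases h1 : π.symm v = s l
      · rw [h1, Equiv.swap_apply_left]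
        exact iff_of_false hnP' hnPl
      · by_cases h2 : π.symm v = s l'
        · rw [h2, Equiv.swap_apply_right]
          exact iff_of_false hnPl hnP'
        · rw [Equiv.swap_apply_of_ne_of_ne h1 h2]
    have hle := hmax l (π (s l')) (fun x hx => by
      have hx' : x = s l' := π.injective hx
      subst hx'
      exact ⟨hnotin l', fun l'' he => by rw [hs_inj he]; exact hll.le⟩)
    unfold envies utility at henv
    rw [hset] at henv
    exact absurd hle (not_le.mpr henv)
  refine ⟨key, ?_⟩
  intro i j hbp
  by_contra hc
  push_neg at hc
  obtain ⟨l, hl⟩ := (hs_range i).mp hc.1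
  obtain ⟨l', hl'⟩ := (hs_range j).mp hc.2
  have hne : i ≠ j := by
    rintro rfl
    have := hbp.1
    unfold envies at this
    rw [Equiv.swap_self, Equiv.refl_trans] at this
    exact lt_irrefl _ this
  subst hl hl'
  rcases lt_or_gt_of_ne (fun h : l = l' => hne (by rw [h])) with h | h
  · exact key l l' h hbp.1
  · exact key l' l h hbp.2
end
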